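/- arXiv:2501.02692 — 10 statements merged into one kernel-verified Lean document; each statement's English description precedes it below -/
import Mathlib

section
/- Fix r ∈ ℕ (including r = 0). Fix a : ℤ → ℂ with a(0) = 0, a(−m) = conj(a(m)) for all m, and ‖a‖_r = Σ_{m∈ℤ} |a(m)|·|m|^r < ∞, and fix a bounded b : ℤ → ℝ. Let γ ≥ 1, let (φ_m)_{m∈ℤ} be an orthonormal (Hilbert) basis of ℓ²(ℤ), and let λ : ℤ → ℝ be such that each (λ(m), φ_m) is an eigenpair of T_0 + b and |λ(m) − m − b(n)| ≤ γ for all m, n ∈ ℤ. Then there exists a constant γ_r > 0, depending only on r, ‖a‖_r and γ, such that |φ_m(n)| ≤ γ_r / |n − m|^{r+1} for all m, n ∈ ℤ with m ≠ n. -/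
noncomputable section

open scoped BigOperators ComplexConjugate

abbrev ℓ2 : Type := lp (fun _ : ℤ => ℂ) 2

/-- `(lam, φ)` is an eigenpair of the long-range operator `T₀ + b`:
for every `n`, `∑_m a (n - m) φ m + (n + b n) φ n = lam • φ n`. -/
def IsEigenpair (a : ℤ → ℂ) (b : ℤ → ℝ) (lam : ℝ) (φ : ℤ → ℂ) : Prop :=
  ∀ n : ℤ, (∑' m : ℤ, a (n - m) * φ m) + ((n : ℂ) + (b n : ℂ)) * φ n = (lam : ℂ) * φ n

/-- Recursively defined constants for the decay estimate. -/
private def Cr (A γ : ℝ) : ℕ → ℝ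
  | 0 => 1
  | j + 1 => 2 ^ (j + 1) * Cr A γ j * (A + 1) + (2 * γ) ^ (j + 1)

set_option maxHeartbeats 1000000 in
theorem stmt_2
    (r : ℕ)
    (a : ℤ → ℂ) (ha0 : a 0 = 0) (hsym : ∀ m : ℤ, a (-m) = conj (a m))
    (hsum : Summable fun m : ℤ => ‖a m‖ * (|m| : ℝ) ^ r)
    (b : ℤ → ℝ) (hb : BddAbove (Set.range fun n : ℤ => |b n|))
    (γ : ℝ) (hγ : 1 ≤ γ) :
    ∃ γr > 0, ∀ (φ : ℤ → ℓ2) (lam : ℤ → ℝ),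
      Orthonormal ℂ φ →
      (Submodule.span ℂ (Set.range φ)).topologicalClosure = ⊤ →
      (∀ m : ℤ, IsEigenpair a b (lam m) (φ m)) →
      (∀ m n : ℤ, |lam m - m - b n| ≤ γ) →
      ∀ m n : ℤ, m ≠ n → ‖(φ m : ∀ _ : ℤ, ℂ) n‖ ≤ γr / (|n - m| : ℝ) ^ (r + 1) := by
  classical
  have hγ0 : (0 : ℝ) < γ := lt_of_lt_of_le one_pos hγ
  -- summability of ‖a‖
  have hS : Summable (fun m : ℤ => ‖a m‖) := by
    refine hsum.of_nonneg_of_le (fun m => norm_nonneg _) ?_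
    intro m
    rcases eq_or_ne m 0 with h | h
    · simp [h, ha0]
    · have h1 : (1 : ℝ) ≤ (|m| : ℝ) ^ r := by
        apply one_le_pow₀
        exact_mod_cast Int.one_le_abs h
      nlinarith [norm_nonneg (a m)]
  have hA : Summable (fun m : ℤ => ‖a m‖ * (1 + (|m| : ℝ) ^ r)) := by
    have := hS.add hsum
    simpa [mul_add, mul_one] using this
  set A : ℝ := ∑' m : ℤ, ‖a m‖ * (1 + (|m| : ℝ) ^ r) with hAdef
  have hA0 : 0 ≤ A := tsum_nonneg fun m => by positivity
  -- the constants are at least 1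
  have hC1 : ∀ j, 1 ≤ Cr A γ j := by
    intro j
    induction j with
    | zero => simp [Cr]
    | succ j ih =>
      have h2 : (1 : ℝ) ≤ (2 * γ) ^ (j + 1) := one_le_pow₀ (by linarith)
      have h3 : (0 : ℝ) ≤ 2 ^ (j + 1) * Cr A γ j * (A + 1) := by positivity
      simp only [Cr]; linarith
  refine ⟨Cr A γ (r + 1), lt_of_lt_of_le one_pos (hC1 _), ?_⟩
  intro φ lam hON _ heig hlam
  have hφle : ∀ m k : ℤ, ‖(φ m : ∀ _ : ℤ, ℂ) k‖ ≤ 1 := by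
    intro m k
    have h := lp.norm_apply_le_norm (by norm_num : (2 : ENNReal) ≠ 0) (φ m) k
    rwa [hON.1 m] at h
  -- main induction
  have key : ∀ j, j ≤ r + 1 → ∀ m n : ℤ, m ≠ n →
      ‖(φ m : ∀ _ : ℤ, ℂ) n‖ ≤ Cr A γ j / (|n - m| : ℝ) ^ j := by
    intro j
    induction j with
    | zero => intro _ m n _; simpa [Cr] using hφle m n
    | succ j ih =>
      intro hjr m n hmn
      have hjr' : j ≤ r := by omega
      have ihj := ih (by omega)
      have hnm0 : n - m ≠ 0 := sub_ne_zero.mpr (Ne.symm hmn)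
      have hnm1 : (1 : ℝ) ≤ (|n - m| : ℝ) := by
        exact_mod_cast Int.one_le_abs hnm0
      have hnmpos : (0 : ℝ) < (|n - m| : ℝ) := lt_of_lt_of_le one_pos hnm1
      have hD : (0 : ℝ) < (|n - m| : ℝ) ^ j := pow_pos hnmpos j
      have hD1 : (0 : ℝ) < (|n - m| : ℝ) ^ (j + 1) := pow_pos hnmpos (j + 1)
      by_cases hcase : (|n - m| : ℝ) < 2 * γ
      · -- small |n - m|
        have h2 : ((|n - m| : ℝ)) ^ (j + 1) ≤ (2 * γ) ^ (j + 1) :=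
          pow_le_pow_left₀ (le_of_lt hnmpos) (le_of_lt hcase) _
        have h3 : (2 * γ) ^ (j + 1) ≤ Cr A γ (j + 1) := by
          have h4 : (0 : ℝ) ≤ 2 ^ (j + 1) * Cr A γ j * (A + 1) := by
            have := hC1 j; positivity
          simp only [Cr]; linarith
        rw [le_div_iff₀ hD1]
        calc ‖(φ m : ∀ _ : ℤ, ℂ) n‖ * (|n - m| : ℝ) ^ (j + 1)
            ≤ 1 * (2 * γ) ^ (j + 1) := by
              apply mul_le_mul (hφle m n) h2 (le_of_lt hD1) one_pos.le
          _ ≤ Cr A γ (j + 1) := by linarith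
      · -- large |n - m|
        push_neg at hcase
        -- translated summability
        have hptw : ∀ k : ℤ, ‖a (n - k)‖ * (1 + (|n - k| : ℝ) ^ r)
            = (fun m : ℤ => ‖a m‖ * (1 + (|m| : ℝ) ^ r)) ((Equiv.subLeft n) k) := by
          intro k
          simp only [Equiv.subLeft_apply]
          push_cast
          ring
        have hAn : Summable (fun k : ℤ => ‖a (n - k)‖ * (1 + (|n - k| : ℝ) ^ r)) := by
          have h := ((Equiv.subLeft n).summable_iff
            (f := fun m : ℤ => ‖a m‖ * (1 + (|m| : ℝ) ^ r))).mpr hA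
          exact h.congr fun k => (hptw k).symm
        have hAn' : (∑' k : ℤ, ‖a (n - k)‖ * (1 + (|n - k| : ℝ) ^ r)) = A := by
          rw [hAdef, ← (Equiv.subLeft n).tsum_eq (f := fun m : ℤ => ‖a m‖ * (1 + (|m| : ℝ) ^ r))]
          exact tsum_congr hptw
        have hsummand_norm : Summable (fun k : ℤ => ‖a (n - k) * (φ m : ∀ _ : ℤ, ℂ) k‖) := by
          refine (hAn.of_nonneg_of_le (fun k => norm_nonneg _) ?_)
          intro k
          rw [norm_mul]
          have h1 : ‖a (n - k)‖ * ‖(φ m : ∀ _ : ℤ, ℂ) k‖ ≤ ‖a (n - k)‖ * 1 :=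
            mul_le_mul_of_nonneg_left (hφle m k) (norm_nonneg _)
          have h2 : ‖a (n - k)‖ * 1 ≤ ‖a (n - k)‖ * (1 + (|n - k| : ℝ) ^ r) := by
            have : (0:ℝ) ≤ (|n - k| : ℝ) ^ r := by positivity
            nlinarith [norm_nonneg (a (n - k))]
          linarith
        have hsummand : Summable (fun k : ℤ => a (n - k) * (φ m : ∀ _ : ℤ, ℂ) k) :=
          hsummand_norm.of_norm
        -- the eigenvalue equation
        have heq : (∑' k : ℤ, a (n - k) * (φ m : ∀ _ : ℤ, ℂ) k)
            = ((lam m : ℂ) - (n : ℂ) - (b n : ℂ)) * (φ m : ∀ _ : ℤ, ℂ) n := by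
          have h := heig m n
          linear_combination h
        set c : ℝ := lam m - (n : ℝ) - b n with hcdef
        have hcast : ((c : ℝ) : ℂ) = (lam m : ℂ) - (n : ℂ) - (b n : ℂ) := by
          rw [hcdef, Complex.ofReal_sub, Complex.ofReal_sub, Complex.ofReal_intCast]
        have hnorm : ‖(∑' k : ℤ, a (n - k) * (φ m : ∀ _ : ℤ, ℂ) k)‖
            = |c| * ‖(φ m : ∀ _ : ℤ, ℂ) n‖ := by
          rw [heq, ← hcast, norm_mul, Complex.norm_real, Real.norm_eq_abs]
        -- lower bound on |c|
        have hclow : (|n - m| : ℝ) - γ ≤ |c| := by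
          have h1 := hlam m n
          have h2 : |(m : ℝ) - (n : ℝ)| ≤ |c| + |lam m - (m : ℝ) - b n| := by
            have h3 := abs_add_le c (-(lam m - (m : ℝ) - b n))
            have h4 : c + -(lam m - (m : ℝ) - b n) = (m : ℝ) - (n : ℝ) := by
              rw [hcdef]; ring
            rw [h4, abs_neg] at h3
            exact h3
          have h5 : (|n - m| : ℝ) = |(m : ℝ) - (n : ℝ)| := abs_sub_comm _ _
          linarith
        have hc2 : (|n - m| : ℝ) / 2 ≤ |c| := by linarith
        -- pointwise bound on the summand
        have hpt : ∀ k : ℤ, ‖a (n - k) * (φ m : ∀ _ : ℤ, ℂ) k‖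
            ≤ (2 ^ j * Cr A γ j / (|n - m| : ℝ) ^ j) * (‖a (n - k)‖ * (1 + (|n - k| : ℝ) ^ r)) := by
          intro k
          rw [norm_mul]
          rcases eq_or_ne k m with hk | hk
          · rw [hk]
            have h1 : ‖(φ m : ∀ _ : ℤ, ℂ) m‖ ≤ 1 := hφle m m
            have h2 : ((|n - m| : ℝ)) ^ j ≤ 1 + (|n - m| : ℝ) ^ r := by
              have := pow_le_pow_right₀ hnm1 hjr'
              linarith
            have h3 : (1 : ℝ) ≤ 2 ^ j * Cr A γ j := by
              have := hC1 j
              have h4 : (1 : ℝ) ≤ (2 : ℝ) ^ j := one_le_pow₀ one_le_two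
              nlinarith
            rw [div_mul_eq_mul_div, le_div_iff₀ hD]
            have hna : (0:ℝ) ≤ ‖a (n - m)‖ := norm_nonneg _
            have h5 : (0:ℝ) ≤ 1 + (|n - m| : ℝ) ^ r := by positivity
            calc ‖a (n - m)‖ * ‖(φ m : ∀ _ : ℤ, ℂ) m‖ * (|n - m| : ℝ) ^ j
                ≤ ‖a (n - m)‖ * 1 * (1 + (|n - m| : ℝ) ^ r) := by
                  apply mul_le_mul (mul_le_mul_of_nonneg_left h1 hna) h2 (by positivity) (by positivity)
              _ ≤ 2 ^ j * Cr A γ j * (‖a (n - m)‖ * (1 + (|n - m| : ℝ) ^ r)) := by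
                  nlinarith [mul_le_mul_of_nonneg_right h3 (mul_nonneg hna h5)]
          · -- k ≠ m : use the induction hypothesis
            have hik := ihj m k (Ne.symm hk)
            have hkm0 : k - m ≠ 0 := sub_ne_zero.mpr hk
            have hkm1 : (1 : ℝ) ≤ (|k - m| : ℝ) := by exact_mod_cast Int.one_le_abs hkm0
            have hkmpos : (0 : ℝ) < (|k - m| : ℝ) ^ j := pow_pos (lt_of_lt_of_le one_pos hkm1) j
            -- key combinatorial estimate:
            have hkey : ((|n - m| : ℝ)) ^ j ≤ 2 ^ j * (1 + (|n - k| : ℝ) ^ r) * (|k - m| : ℝ) ^ j := by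
              rcases eq_or_ne k n with hkn | hkn
              · rw [hkn]
                have h8 : (1:ℝ) ≤ (2:ℝ) ^ j := one_le_pow₀ one_le_two
                have h9 : (0:ℝ) ≤ |(n:ℝ) - (n:ℝ)| ^ r := by positivity
                have h7 : (1 : ℝ) ≤ 2 ^ j * (1 + |(n:ℝ) - (n:ℝ)| ^ r) := by nlinarith
                nlinarith [mul_le_mul_of_nonneg_right h7 hD.le]
              · have hnk0 : n - k ≠ 0 := sub_ne_zero.mpr (Ne.symm hkn)
                have hnk1 : (1 : ℝ) ≤ (|n - k| : ℝ) := by exact_mod_cast Int.one_le_abs hnk0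
                have htri : (|n - m| : ℝ) ≤ (|n - k| : ℝ) + (|k - m| : ℝ) := by
                  have h10 : |n - m| ≤ |n - k| + |k - m| := by
                    calc |n - m| = |(n - k) + (k - m)| := by ring_nf
                      _ ≤ |n - k| + |k - m| := abs_add_le _ _
                  exact_mod_cast h10
                have hxy : (|n - k| : ℝ) + (|k - m| : ℝ) ≤ 2 * ((|n - k| : ℝ) * (|k - m| : ℝ)) := by
                  have hx1 : (1:ℝ) ≤ (|n - k| : ℝ) * (|k - m| : ℝ) := by
                    nlinarith [mul_nonneg (sub_nonneg.mpr hnk1) (sub_nonneg.mpr hkm1)]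
                  nlinarith [mul_nonneg (sub_nonneg.mpr hnk1) (sub_nonneg.mpr hkm1)]
                have h11 : ((|n - m| : ℝ)) ^ j ≤ (2 * ((|n - k| : ℝ) * (|k - m| : ℝ))) ^ j :=
                  pow_le_pow_left₀ (le_of_lt hnmpos) (le_trans htri hxy) j
                have h12 : (2 * ((|n - k| : ℝ) * (|k - m| : ℝ))) ^ j
                    = 2 ^ j * (|n - k| : ℝ) ^ j * (|k - m| : ℝ) ^ j := by ring
                have h13 : (|n - k| : ℝ) ^ j ≤ (|n - k| : ℝ) ^ r := pow_le_pow_right₀ hnk1 hjr'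
                have h15 : (0:ℝ) ≤ (|k - m| : ℝ) ^ j := by positivity
                have h16 : (0:ℝ) ≤ (2:ℝ) ^ j := by positivity
                calc ((|n - m| : ℝ)) ^ j
                    ≤ 2 ^ j * (|n - k| : ℝ) ^ j * (|k - m| : ℝ) ^ j := by rw [← h12]; exact h11
                  _ ≤ 2 ^ j * (1 + (|n - k| : ℝ) ^ r) * (|k - m| : ℝ) ^ j := by
                      have h14 : (|n - k| : ℝ) ^ j ≤ 1 + (|n - k| : ℝ) ^ r := by linarith
                      exact mul_le_mul_of_nonneg_right
                        (mul_le_mul_of_nonneg_left h14 h16) h15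
            -- combine
            rw [div_mul_eq_mul_div, le_div_iff₀ hD]
            have hna : (0:ℝ) ≤ ‖a (n - k)‖ := norm_nonneg _
            have hφ0 : (0:ℝ) ≤ ‖(φ m : ∀ _ : ℤ, ℂ) k‖ := norm_nonneg _
            have hCj := hC1 j
            have hik' : ‖(φ m : ∀ _ : ℤ, ℂ) k‖ * (|k - m| : ℝ) ^ j ≤ Cr A γ j := by
              rw [le_div_iff₀ hkmpos] at hik; exact hik
            calc ‖a (n - k)‖ * ‖(φ m : ∀ _ : ℤ, ℂ) k‖ * (|n - m| : ℝ) ^ j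
                ≤ ‖a (n - k)‖ * ‖(φ m : ∀ _ : ℤ, ℂ) k‖ * (2 ^ j * (1 + (|n - k| : ℝ) ^ r) * (|k - m| : ℝ) ^ j) := by
                  exact mul_le_mul_of_nonneg_left hkey (mul_nonneg hna hφ0)
              _ = (2 ^ j * (1 + (|n - k| : ℝ) ^ r) * ‖a (n - k)‖) * (‖(φ m : ∀ _ : ℤ, ℂ) k‖ * (|k - m| : ℝ) ^ j) := by ring
              _ ≤ (2 ^ j * (1 + (|n - k| : ℝ) ^ r) * ‖a (n - k)‖) * Cr A γ j := by
                  exact mul_le_mul_of_nonneg_left hik' (by positivity)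
              _ = 2 ^ j * Cr A γ j * (‖a (n - k)‖ * (1 + (|n - k| : ℝ) ^ r)) := by ring
        -- sum the pointwise bound
        have htsum : ‖(∑' k : ℤ, a (n - k) * (φ m : ∀ _ : ℤ, ℂ) k)‖
            ≤ (2 ^ j * Cr A γ j / (|n - m| : ℝ) ^ j) * A := by
          calc ‖(∑' k : ℤ, a (n - k) * (φ m : ∀ _ : ℤ, ℂ) k)‖
              ≤ ∑' k : ℤ, ‖a (n - k) * (φ m : ∀ _ : ℤ, ℂ) k‖ :=
                norm_tsum_le_tsum_norm hsummand_norm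
            _ ≤ ∑' k : ℤ, (2 ^ j * Cr A γ j / (|n - m| : ℝ) ^ j) * (‖a (n - k)‖ * (1 + (|n - k| : ℝ) ^ r)) := by
                apply Summable.tsum_le_tsum hpt hsummand_norm
                exact hAn.mul_left _
            _ = (2 ^ j * Cr A γ j / (|n - m| : ℝ) ^ j) * ∑' k : ℤ, (‖a (n - k)‖ * (1 + (|n - k| : ℝ) ^ r)) := tsum_mul_left
            _ = (2 ^ j * Cr A γ j / (|n - m| : ℝ) ^ j) * A := by rw [hAn']
        -- conclude
        rw [hnorm] at htsum
        have hfin : ((|n - m| : ℝ) / 2) * ‖(φ m : ∀ _ : ℤ, ℂ) n‖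
            ≤ 2 ^ j * Cr A γ j * A / (|n - m| : ℝ) ^ j := by
          have h20 : ((|n - m| : ℝ) / 2) * ‖(φ m : ∀ _ : ℤ, ℂ) n‖ ≤ |c| * ‖(φ m : ∀ _ : ℤ, ℂ) n‖ :=
            mul_le_mul_of_nonneg_right hc2 (norm_nonneg _)
          calc ((|n - m| : ℝ) / 2) * ‖(φ m : ∀ _ : ℤ, ℂ) n‖ ≤ |c| * ‖(φ m : ∀ _ : ℤ, ℂ) n‖ := h20
            _ ≤ (2 ^ j * Cr A γ j / (|n - m| : ℝ) ^ j) * A := htsum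
            _ = 2 ^ j * Cr A γ j * A / (|n - m| : ℝ) ^ j := by ring
        rw [le_div_iff₀ hD1]
        have hexp : ((|n - m| : ℝ)) ^ (j + 1) = (|n - m| : ℝ) ^ j * (|n - m| : ℝ) := by ring
        have h21 : ‖(φ m : ∀ _ : ℤ, ℂ) n‖ * (|n - m| : ℝ) ^ (j + 1)
            ≤ 2 ^ (j + 1) * Cr A γ j * A := by
          have h22 := mul_le_mul_of_nonneg_right hfin (le_of_lt hD)
          rw [div_mul_cancel₀ _ (ne_of_gt hD)] at h22
          have e1 : ‖(φ m : ∀ _ : ℤ, ℂ) n‖ * (|n - m| : ℝ) ^ (j + 1)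
              = 2 * (((|n - m| : ℝ) / 2) * ‖(φ m : ∀ _ : ℤ, ℂ) n‖ * (|n - m| : ℝ) ^ j) := by
            ring
          have e2 : (2:ℝ) ^ (j + 1) * Cr A γ j * A = 2 * (2 ^ j * Cr A γ j * A) := by ring
          rw [e1, e2]
          linarith
        have h23 : 2 ^ (j + 1) * Cr A γ j * A ≤ Cr A γ (j + 1) := by
          have h24 : (0:ℝ) < (2 * γ) ^ (j + 1) := by positivity
          have h25 : (0:ℝ) ≤ (2:ℝ) ^ (j+1) := by positivity
          have h26 : (0:ℝ) ≤ (2:ℝ) ^ (j+1) * Cr A γ j :=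
            mul_nonneg h25 (le_trans zero_le_one (hC1 j))
          simp only [Cr]; nlinarith [h26, h24]
        linarith
  intro m n hmn
  exact key (r + 1) le_rfl m n hmn
end
end

section
/- Fix r ∈ ℕ with r ≥ 1. Fix a : ℤ → ℂ with a(0) = 0, a(−m) = conj(a(m)) for all m, and ‖a‖_r = Σ_{m∈ℤ} |a(m)|·|m|^r < ∞, and fix a bounded b : ℤ → ℝ. Let γ ≥ 1, let (φ_m)_{m∈ℤ} be an orthonormal (Hilbert) basis of ℓ²(ℤ), and let λ : ℤ → ℝ be such that each (λ(m), φ_m) is an eigenpair of T_0 + b and |λ(m) − m − b(n)| ≤ γ for all m, n ∈ ℤ. Then for every q with 0 < q < 2r − 1 and every k ∈ ℤ, sup over t ∈ ℝ of Σ_{n∈ℤ} |n|^q · |Σ_{m∈ℤ} e^{−i t λ(m)} · conj(φ_m(k)) · φ_m(n)|² is finite. -/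
noncomputable section

open scoped BigOperators ComplexConjugate

/-!
Write `⟨x⟩ = 1 + |x|`. Far from `m`, i.e. for `⟨n - m⟩ ≥ 2γ + 2`, the localization hypothesis
gives `⟨n - m⟩ ≤ 2 |λ(m) - n - b(n)|`, and the eigenvalue equation writes
`(λ(m) - n - b(n)) φ_m(n)` as the convolution `∑_j a(n - j) φ_m(j)`. Since `⟨·⟩` is
submultiplicative, each use of the equation trades one moment of `a` for one power of decay,
so `|φ_m(n)| ≲ ⟨n - m⟩^{-r}` uniformly in `m`. The propagator kernel is then dominated,
uniformly in `t`, by `∑_m ⟨m - k⟩^{-r} ⟨n - m⟩^{-r} ≲ ⟨n - k⟩^{-c}` for any `c ≤ r` with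
`c < 2r - 1`, and the `q`-th moment converges as soon as `2c - q > 1`.
-/

namespace LongRange

open Real

def bracket (x : ℤ) : ℝ := 1 + |(x : ℝ)|

lemma one_le_bracket (x : ℤ) : 1 ≤ bracket x := le_add_of_nonneg_right (abs_nonneg _)

lemma bracket_pos (x : ℤ) : 0 < bracket x := one_pos.trans_le (one_le_bracket x)

lemma bracket_neg (x : ℤ) : bracket (-x) = bracket x := by simp [bracket]

lemma bracket_add_le (x y : ℤ) : bracket (x + y) ≤ bracket x + bracket y := by
  have := abs_add_le (x : ℝ) y
  simp only [bracket, Int.cast_add]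
  linarith

lemma bracket_add_le_mul (x y : ℤ) : bracket (x + y) ≤ bracket x * bracket y := by
  have := abs_add_le (x : ℝ) y
  have := mul_nonneg (abs_nonneg (x : ℝ)) (abs_nonneg (y : ℝ))
  simp only [bracket, Int.cast_add]
  nlinarith

lemma summable_bracket_rpow {p : ℝ} (hp : p < -1) : Summable fun n : ℤ => bracket n ^ p := by
  refine (summable_abs_int_rpow (b := -p) (by linarith)).of_norm_bounded_eventually ?_
  filter_upwards [Filter.eventually_cofinite_ne 0] with n hn
  rw [norm_of_nonneg (rpow_nonneg (bracket_pos n).le _), neg_neg]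
  exact rpow_le_rpow_of_nonpos (abs_pos.2 (Int.cast_ne_zero.2 hn))
    (le_add_of_nonneg_left zero_le_one) (by linarith)

lemma le_mul_bracket_rpow_neg {z D ρ : ℝ} {x : ℤ} (h : z * bracket x ^ ρ ≤ D) :
    z ≤ D * bracket x ^ (-ρ) := by
  rwa [rpow_neg (bracket_pos x).le, le_mul_inv_iff₀ (rpow_pos_of_pos (bracket_pos x) _)]

lemma summable_norm_mul_bracket_pow {a : ℤ → ℂ} {r : ℕ}
    (h : Summable fun m : ℤ => ‖a m‖ * (|m| : ℝ) ^ r) :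
    Summable fun m : ℤ => ‖a m‖ * bracket m ^ r := by
  refine (h.mul_left (2 ^ r)).of_norm_bounded_eventually ?_
  filter_upwards [Filter.eventually_cofinite_ne 0] with m hm
  have hm1 : (1 : ℝ) ≤ |(m : ℝ)| := by exact_mod_cast Int.one_le_abs hm
  have hbr : bracket m ≤ 2 * |(m : ℝ)| := by rw [bracket]; linarith
  have := bracket_pos m
  rw [norm_of_nonneg (by positivity), mul_left_comm, ← mul_pow]
  gcongr

lemma bracket_le_two_mul_abs {μ γ : ℝ} {m n : ℤ} (h : |μ - m| ≤ γ)
    (hn : 2 * γ + 2 ≤ bracket (n - m)) : bracket (n - m) ≤ 2 * |μ - n| := by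
  have := abs_sub_le (n : ℝ) μ m
  rw [abs_sub_comm (n : ℝ) μ] at this
  simp only [bracket, Int.cast_sub] at hn ⊢
  linarith

section Decay

variable {a ψ : ℤ → ℂ} {r : ℕ}

lemma norm_tsum_mul_bracket_pow_le {s : ℕ} (hs : s ≤ r)
    (ha : Summable fun j : ℤ => ‖a j‖ * bracket j ^ r) {m : ℤ} {D : ℝ}
    (hψ : ∀ j, ‖ψ j‖ * bracket (j - m) ^ s ≤ D) (n : ℤ) :
    ‖∑' j : ℤ, a (n - j) * ψ j‖ * bracket (n - m) ^ s ≤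
      D * ∑' j : ℤ, ‖a j‖ * bracket j ^ r := by
  have hnm := pow_pos (bracket_pos (n - m)) s
  have hterm : ∀ j, ‖a (n - j) * ψ j‖ ≤
      D * (‖a (n - j)‖ * bracket (n - j) ^ r) / bracket (n - m) ^ s := by
    intro j
    have hsplit : bracket (n - m) ≤ bracket (n - j) * bracket (j - m) := by
      simpa only [sub_add_sub_cancel] using bracket_add_le_mul (n - j) (j - m)
    rw [le_div_iff₀ hnm, norm_mul]
    calc ‖a (n - j)‖ * ‖ψ j‖ * bracket (n - m) ^ s
        ≤ ‖a (n - j)‖ * ‖ψ j‖ * (bracket (n - j) * bracket (j - m)) ^ s := by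
          gcongr; exact (bracket_pos _).le
      _ = (‖a (n - j)‖ * bracket (n - j) ^ s) * (‖ψ j‖ * bracket (j - m) ^ s) := by ring
      _ ≤ (‖a (n - j)‖ * bracket (n - j) ^ r) * D := by
          have := bracket_pos (n - j)
          have := bracket_pos (j - m)
          refine mul_le_mul ?_ (hψ j) (by positivity) (by positivity)
          exact mul_le_mul_of_nonneg_left (pow_le_pow_right₀ (one_le_bracket _) hs) (by positivity)
      _ = D * (‖a (n - j)‖ * bracket (n - j) ^ r) := mul_comm _ _
  have hdom : HasSum (fun j => D * (‖a (n - j)‖ * bracket (n - j) ^ r) / bracket (n - m) ^ s)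
      (D * (∑' j : ℤ, ‖a j‖ * bracket j ^ r) / bracket (n - m) ^ s) :=
    (((Equiv.subLeft n).hasSum_iff.2 ha.hasSum).mul_left D).div_const _
  rw [← le_div_iff₀ hnm]
  exact tsum_of_norm_bounded hdom hterm

theorem norm_mul_bracket_pow_le_of_isEigenpair {b : ℤ → ℝ} {μ γ : ℝ} {m : ℤ}
    (ha : Summable fun j : ℤ => ‖a j‖ * bracket j ^ r) (hψ : IsEigenpair a b μ ψ)
    (hψ1 : ∀ n, ‖ψ n‖ ≤ 1) (hloc : ∀ n, |μ - m - b n| ≤ γ) {s : ℕ} (hs : s ≤ r) (n : ℤ) :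
    ‖ψ n‖ * bracket (n - m) ^ s ≤ (2 * ∑' j : ℤ, ‖a j‖ * bracket j ^ r + 2 * γ + 2) ^ s := by
  set A := ∑' j : ℤ, ‖a j‖ * bracket j ^ r
  have hA : 0 ≤ A := tsum_nonneg fun j => by have := bracket_pos j; positivity
  have hγ : 0 ≤ γ := (abs_nonneg _).trans (hloc 0)
  induction s generalizing n with
  | zero => simpa using hψ1 n
  | succ s ih =>
    have ih := ih (by omega)
    have hnm := bracket_pos (n - m)
    rcases le_or_gt (bracket (n - m)) (2 * γ + 2) with hnear | hfar
    · calc ‖ψ n‖ * bracket (n - m) ^ (s + 1) ≤ 1 * (2 * γ + 2) ^ (s + 1) := by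
            gcongr
            exact hψ1 n
        _ ≤ (2 * A + 2 * γ + 2) ^ (s + 1) := by rw [one_mul]; gcongr; linarith
    · have hgap := bracket_le_two_mul_abs (μ := μ - b n) (by simpa [sub_right_comm] using hloc n)
        hfar.le
      have hconv : ∑' j : ℤ, a (n - j) * ψ j = ((μ - b n - n : ℝ) : ℂ) * ψ n := by
        push_cast
        linear_combination hψ n
      calc ‖ψ n‖ * bracket (n - m) ^ (s + 1)
          = bracket (n - m) * (‖ψ n‖ * bracket (n - m) ^ s) := by ring
        _ ≤ 2 * |μ - b n - n| * (‖ψ n‖ * bracket (n - m) ^ s) := by gcongr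
        _ = 2 * (‖∑' j : ℤ, a (n - j) * ψ j‖ * bracket (n - m) ^ s) := by
            rw [hconv, norm_mul, Complex.norm_real, norm_eq_abs]; ring
        _ ≤ 2 * ((2 * A + 2 * γ + 2) ^ s * A) :=
            mul_le_mul_of_nonneg_left (norm_tsum_mul_bracket_pow_le (by omega) ha ih n)
              zero_le_two
        _ ≤ (2 * A + 2 * γ + 2) ^ s * (2 * A + 2 * γ + 2) := by
            rw [mul_left_comm]; gcongr; linarith
        _ = (2 * A + 2 * γ + 2) ^ (s + 1) := (pow_succ _ _).symm

end Decay

lemma rpow_mul_rpow_neg_mul_rpow_neg_le {u v w c ρ : ℝ} (hu : 0 < u) (hv : 0 < v) (hw : 0 ≤ w)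
    (hwuv : w ≤ u + v) (hc : 0 ≤ c) (hcρ : c ≤ ρ) :
    w ^ c * (u ^ (-ρ) * v ^ (-ρ)) ≤ 2 ^ c * (u ^ (c - 2 * ρ) + v ^ (c - 2 * ρ)) := by
  wlog huv : u ≤ v generalizing u v
  · have := this hv hu (by linarith) (le_of_not_ge huv)
    rwa [mul_comm (v ^ _), add_comm (v ^ _)] at this
  calc w ^ c * (u ^ (-ρ) * v ^ (-ρ)) ≤ (2 * v) ^ c * (u ^ (-ρ) * v ^ (-ρ)) := by
        gcongr; linarith
    _ = 2 ^ c * (u ^ (-ρ) * v ^ (c - ρ)) := by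
        rw [mul_rpow zero_le_two hv.le, sub_eq_add_neg, rpow_add hv]; ring
    _ ≤ 2 ^ c * (u ^ (-ρ) * u ^ (c - ρ)) := by
        gcongr ?_ * (_ * ?_)
        exact rpow_le_rpow_of_nonpos hu huv (by linarith)
    _ = 2 ^ c * u ^ (c - 2 * ρ) := by rw [← rpow_add hu]; ring_nf
    _ ≤ 2 ^ c * (u ^ (c - 2 * ρ) + v ^ (c - 2 * ρ)) := by
        gcongr; exact le_add_of_nonneg_right (rpow_nonneg hv.le _)

lemma summable_and_bracket_rpow_mul_tsum_le {ρ c : ℝ} (hc : 0 ≤ c) (hcρ : c ≤ ρ) (hρc : 1 < 2 * ρ - c)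
    (k n : ℤ) :
    Summable (fun m : ℤ => bracket (m - k) ^ (-ρ) * bracket (n - m) ^ (-ρ)) ∧
      bracket (n - k) ^ c * ∑' m : ℤ, bracket (m - k) ^ (-ρ) * bracket (n - m) ^ (-ρ) ≤
        2 ^ c * (2 * ∑' j : ℤ, bracket j ^ (c - 2 * ρ)) := by
  have hZ := summable_bracket_rpow (p := c - 2 * ρ) (by linarith)
  have hZk : Summable fun m : ℤ => bracket (m - k) ^ (c - 2 * ρ) :=
    hZ.comp_injective sub_left_injective
  have hZn : Summable fun m : ℤ => bracket (n - m) ^ (c - 2 * ρ) :=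
    hZ.comp_injective sub_right_injective
  have hterm : ∀ m : ℤ, bracket (n - k) ^ c * (bracket (m - k) ^ (-ρ) * bracket (n - m) ^ (-ρ))
      ≤ 2 ^ c * (bracket (m - k) ^ (c - 2 * ρ) + bracket (n - m) ^ (c - 2 * ρ)) := fun m =>
    rpow_mul_rpow_neg_mul_rpow_neg_le (bracket_pos _) (bracket_pos _) (bracket_pos _).le
      (by simpa only [sub_add_sub_cancel'] using bracket_add_le (m - k) (n - m)) hc hcρ
  have hdom := (hZk.add hZn).mul_left (2 ^ c)
  have hprod : Summable fun m : ℤ => bracket (m - k) ^ (-ρ) * bracket (n - m) ^ (-ρ) := by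
    have hnonneg : ∀ m : ℤ, 0 ≤ bracket (m - k) ^ (-ρ) * bracket (n - m) ^ (-ρ) := fun m =>
      mul_nonneg (rpow_nonneg (bracket_pos _).le _) (rpow_nonneg (bracket_pos _).le _)
    refine hdom.of_nonneg_of_le hnonneg fun m => le_trans ?_ (hterm m)
    exact le_mul_of_one_le_left (hnonneg m) (one_le_rpow (one_le_bracket _) hc)
  refine ⟨hprod, ?_⟩
  calc bracket (n - k) ^ c * ∑' m : ℤ, bracket (m - k) ^ (-ρ) * bracket (n - m) ^ (-ρ)
      = ∑' m : ℤ, bracket (n - k) ^ c * (bracket (m - k) ^ (-ρ) * bracket (n - m) ^ (-ρ)) :=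
        tsum_mul_left.symm
    _ ≤ ∑' m : ℤ, 2 ^ c * (bracket (m - k) ^ (c - 2 * ρ) + bracket (n - m) ^ (c - 2 * ρ)) :=
        (hprod.mul_left _).tsum_le_tsum hterm hdom
    _ = 2 ^ c * (2 * ∑' j : ℤ, bracket j ^ (c - 2 * ρ)) := by
        have hk : ∑' m : ℤ, bracket (m - k) ^ (c - 2 * ρ) = ∑' j : ℤ, bracket j ^ (c - 2 * ρ) :=
          (Equiv.subRight k).tsum_eq fun j => bracket j ^ (c - 2 * ρ)
        have hn : ∑' m : ℤ, bracket (n - m) ^ (c - 2 * ρ) = ∑' j : ℤ, bracket j ^ (c - 2 * ρ) :=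
          (Equiv.subLeft n).tsum_eq fun j => bracket j ^ (c - 2 * ρ)
        rw [tsum_mul_left, hZk.tsum_add hZn, hk, hn]; ring

lemma norm_tsum_mul_conj_mul_bracket_rpow_le {ψ : ℤ → ℤ → ℂ} {θ : ℤ → ℂ} {ρ c D : ℝ}
    (hθ : ∀ m, ‖θ m‖ ≤ 1) (hψ : ∀ m j, ‖ψ m j‖ * bracket (j - m) ^ ρ ≤ D)
    (hc : 0 ≤ c) (hcρ : c ≤ ρ) (hρc : 1 < 2 * ρ - c) (k n : ℤ) :
    ‖∑' m : ℤ, θ m * conj (ψ m k) * ψ m n‖ * bracket (n - k) ^ c ≤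
      D ^ 2 * (2 ^ c * (2 * ∑' j : ℤ, bracket j ^ (c - 2 * ρ))) := by
  obtain ⟨hsum, hconv⟩ := summable_and_bracket_rpow_mul_tsum_le hc hcρ hρc k n
  have hD : 0 ≤ D :=
    (mul_nonneg (norm_nonneg _) (rpow_nonneg (bracket_pos _).le _)).trans (hψ 0 0)
  have hterm : ∀ m, ‖θ m * conj (ψ m k) * ψ m n‖ ≤
      D ^ 2 * (bracket (m - k) ^ (-ρ) * bracket (n - m) ^ (-ρ)) := by
    intro m
    have hk := le_mul_bracket_rpow_neg (hψ m k)
    rw [show k - m = -(m - k) by ring, bracket_neg] at hk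
    rw [norm_mul, norm_mul, RCLike.norm_conj]
    calc ‖θ m‖ * ‖ψ m k‖ * ‖ψ m n‖
        ≤ 1 * (D * bracket (m - k) ^ (-ρ)) * (D * bracket (n - m) ^ (-ρ)) := by
          have := bracket_pos (m - k)
          exact mul_le_mul (mul_le_mul (hθ m) hk (norm_nonneg _) zero_le_one)
            (le_mul_bracket_rpow_neg (hψ m n)) (norm_nonneg _) (by positivity)
      _ = D ^ 2 * (bracket (m - k) ^ (-ρ) * bracket (n - m) ^ (-ρ)) := by ring
  have hnorm := tsum_of_norm_bounded (hsum.hasSum.mul_left (D ^ 2)) hterm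
  have := bracket_pos (n - k)
  calc ‖∑' m : ℤ, θ m * conj (ψ m k) * ψ m n‖ * bracket (n - k) ^ c
      ≤ (D ^ 2 * ∑' m : ℤ, bracket (m - k) ^ (-ρ) * bracket (n - m) ^ (-ρ)) *
          bracket (n - k) ^ c := by
        gcongr
    _ = D ^ 2 * (bracket (n - k) ^ c *
          ∑' m : ℤ, bracket (m - k) ^ (-ρ) * bracket (n - m) ^ (-ρ)) := by ring
    _ ≤ D ^ 2 * (2 ^ c * (2 * ∑' j : ℤ, bracket j ^ (c - 2 * ρ))) := by gcongr

lemma summable_and_tsum_abs_rpow_mul_sq_le {K : ℤ → ℂ} {q c B : ℝ} (hq : 0 ≤ q)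
    (hqc : 1 < 2 * c - q) (k : ℤ) (hK : ∀ n, ‖K n‖ * bracket (n - k) ^ c ≤ B) :
    Summable (fun n : ℤ => (|n| : ℝ) ^ q * ‖K n‖ ^ 2) ∧
      ∑' n : ℤ, (|n| : ℝ) ^ q * ‖K n‖ ^ 2 ≤
        bracket k ^ q * B ^ 2 * ∑' j : ℤ, bracket j ^ (q - 2 * c) := by
  have hZ : Summable fun n : ℤ => bracket (n - k) ^ (q - 2 * c) :=
    (summable_bracket_rpow (by linarith)).comp_injective sub_left_injective
  have hterm : ∀ n : ℤ, (|n| : ℝ) ^ q * ‖K n‖ ^ 2 ≤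
      bracket k ^ q * B ^ 2 * bracket (n - k) ^ (q - 2 * c) := by
    intro n
    have := bracket_pos k
    have hnk := bracket_pos (n - k)
    have habs : |(n : ℝ)| ≤ bracket k * bracket (n - k) :=
      calc |(n : ℝ)| ≤ bracket (k + (n - k)) := by simp [bracket]
        _ ≤ bracket k * bracket (n - k) := bracket_add_le_mul _ _
    have hKn := le_mul_bracket_rpow_neg (hK n)
    calc (|n| : ℝ) ^ q * ‖K n‖ ^ 2
        ≤ (bracket k * bracket (n - k)) ^ q * (B * bracket (n - k) ^ (-c)) ^ 2 := by
          gcongr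
      _ = bracket k ^ q * B ^ 2 * (bracket (n - k) ^ q * bracket (n - k) ^ (-c) *
            bracket (n - k) ^ (-c)) := by
          rw [mul_rpow (bracket_pos _).le hnk.le]; ring
      _ = bracket k ^ q * B ^ 2 * bracket (n - k) ^ (q - 2 * c) := by
          rw [← rpow_add hnk, ← rpow_add hnk]; ring_nf
  have hdom := hZ.mul_left (bracket k ^ q * B ^ 2)
  have hsum : Summable fun n : ℤ => (|n| : ℝ) ^ q * ‖K n‖ ^ 2 :=
    hdom.of_nonneg_of_le (fun n => by positivity) hterm
  refine ⟨hsum, (hsum.tsum_le_tsum hterm hdom).trans_eq ?_⟩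
  rw [tsum_mul_left]
  exact congrArg _ ((Equiv.subRight k).tsum_eq fun j => bracket j ^ (q - 2 * c))

end LongRange

open LongRange

theorem stmt_3_general
    (r : ℕ) (hr : 1 ≤ r)
    (a : ℤ → ℂ)
    (hsum : Summable fun m : ℤ => ‖a m‖ * (|m| : ℝ) ^ r)
    (b : ℤ → ℝ)
    (γ : ℝ)
    (φ : ℤ → ℓ2) (lam : ℤ → ℝ)
    (hON : Orthonormal ℂ φ)
    (heig : ∀ m : ℤ, IsEigenpair a b (lam m) (φ m))
    (hloc : ∀ m n : ℤ, |lam m - m - b n| ≤ γ) :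
    ∀ q : ℝ, 0 < q → q < 2 * r - 1 → ∀ k : ℤ,
      ∃ C : ℝ, ∀ t : ℝ,
        Summable (fun n : ℤ => (|n| : ℝ) ^ q *
          ‖∑' m : ℤ, Complex.exp (-(Complex.I * t * lam m)) *
            conj ((φ m : ∀ _ : ℤ, ℂ) k) * (φ m : ∀ _ : ℤ, ℂ) n‖ ^ 2) ∧
        (∑' n : ℤ, (|n| : ℝ) ^ q *
          ‖∑' m : ℤ, Complex.exp (-(Complex.I * t * lam m)) *
            conj ((φ m : ∀ _ : ℤ, ℂ) k) * (φ m : ∀ _ : ℤ, ℂ) n‖ ^ 2) ≤ C := by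
  intro q hq0 hq k
  have hr1 : (1 : ℝ) ≤ r := by exact_mod_cast hr
  obtain ⟨c, hc0, hcr, hrc, hqc⟩ : ∃ c : ℝ, 0 ≤ c ∧ c ≤ r ∧ 1 < 2 * r - c ∧ 1 < 2 * c - q :=
    ⟨((q + 1) / 2 + r) / 2, by positivity, by linarith, by linarith, by linarith⟩
  have hdecay : ∀ m j, ‖(φ m : ∀ _ : ℤ, ℂ) j‖ * bracket (j - m) ^ (r : ℝ) ≤
      (2 * ∑' j : ℤ, ‖a j‖ * bracket j ^ r + 2 * γ + 2) ^ r := fun m j => by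
    rw [Real.rpow_natCast]
    refine norm_mul_bracket_pow_le_of_isEigenpair (summable_norm_mul_bracket_pow hsum) (heig m)
      (fun n => ?_) (hloc m) le_rfl j
    simpa [hON.1 m] using lp.norm_apply_le_norm two_ne_zero (φ m) n
  refine ⟨_, fun t => summable_and_tsum_abs_rpow_mul_sq_le hq0.le hqc k fun n =>
    norm_tsum_mul_conj_mul_bracket_rpow_le (fun m => ?_) hdecay hc0 hcr hrc k n⟩
  rw [show -(Complex.I * t * lam m) = ((-(t * lam m) : ℝ) : ℂ) * Complex.I by push_cast; ring]
  exact (Complex.norm_exp_ofReal_mul_I _).le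

theorem stmt_3
    (r : ℕ) (hr : 1 ≤ r)
    (a : ℤ → ℂ) (ha0 : a 0 = 0) (hsym : ∀ m : ℤ, a (-m) = conj (a m))
    (hsum : Summable fun m : ℤ => ‖a m‖ * (|m| : ℝ) ^ r)
    (b : ℤ → ℝ) (hb : BddAbove (Set.range fun n : ℤ => |b n|))
    (γ : ℝ) (hγ : 1 ≤ γ)
    (φ : ℤ → ℓ2) (lam : ℤ → ℝ)
    (hON : Orthonormal ℂ φ)
    (hcomplete : (Submodule.span ℂ (Set.range φ)).topologicalClosure = ⊤)
    (heig : ∀ m : ℤ, IsEigenpair a b (lam m) (φ m))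
    (hloc : ∀ m n : ℤ, |lam m - m - b n| ≤ γ) :
    ∀ q : ℝ, 0 < q → q < 2 * r - 1 → ∀ k : ℤ,
      ∃ C : ℝ, ∀ t : ℝ,
        Summable (fun n : ℤ => (|n| : ℝ) ^ q *
          ‖∑' m : ℤ, Complex.exp (-(Complex.I * t * lam m)) *
            conj ((φ m : ∀ _ : ℤ, ℂ) k) * (φ m : ∀ _ : ℤ, ℂ) n‖ ^ 2) ∧
        (∑' n : ℤ, (|n| : ℝ) ^ q *
          ‖∑' m : ℤ, Complex.exp (-(Complex.I * t * lam m)) *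
            conj ((φ m : ∀ _ : ℤ, ℂ) k) * (φ m : ∀ _ : ℤ, ℂ) n‖ ^ 2) ≤ C :=
  stmt_3_general r hr a hsum b γ φ lam hON heig hloc
end
end

section
/- Fix a bounded b : ℤ → ℝ. Let γ ≥ 1, let (φ_m)_{m∈ℤ} be an orthonormal (Hilbert) basis of ℓ²(ℤ), and let λ : ℤ → ℝ be such that for each m and every n ∈ ℤ: φ_m(n−1) + φ_m(n+1) + (n + b(n))·φ_m(n) = λ(m)·φ_m(n), and |λ(m) − m − b(n)| ≤ γ for all m, n ∈ ℤ. Then for every q > 0 and every k ∈ ℤ, sup over t ∈ ℝ of Σ_{n∈ℤ} |n|^q · |Σ_{m∈ℤ} e^{−i t λ(m)} · conj(φ_m(k)) · φ_m(n)|² is finite. That is, the perturbed discrete Schrödinger operator with uniform electric field H_0 + b exhibits dynamical localization: all moments of order q > 0 are uniformly bounded in time. -/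
/-!
Where `|n - m| > γ + 2`, the eigenvalue equation forces `|λ(m) - n - b(n)| ≥ 3`, hence
`3 |φ_m(n)| ≤ |φ_m(n - 1)| + |φ_m(n + 1)|`; together with `|φ_m| ≤ 1` this gives
`|φ_m(n)| ≤ K (2/3)^|n - m|`. Writing `2/3 = r²`, the matrix element of `e^{-itH}` is then bounded,
uniformly in `t`, by `K² Σ_m r^(2|k - m| + 2|n - m|) ≤ K² (Σ_j r^|j|) r^|n - k|`, so its square decays
like `(2/3)^|n - k|`, which beats every polynomial weight `|n|^q`.
-/

noncomputable section

open scoped BigOperators ComplexConjugate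

section ThreeTermDecay

variable {g : ℤ → ℝ} {B c : ℝ}

theorem le_mul_pow_of_mul_le_add_neighbours (hc : 0 < c) (hgB : ∀ n, g n ≤ B) {N : ℤ}
    (hrec : ∀ n, N < n → c * g n ≤ g (n - 1) + g (n + 1)) (j : ℕ) :
    ∀ n, N + j ≤ n → g n ≤ B * (2 / c) ^ j := by
  induction j with
  | zero => exact fun n _ => by simpa using hgB n
  | succ j ih =>
    intro n hn
    have hprev := ih (n - 1) (by push_cast at hn; omega)
    have hnext := ih (n + 1) (by push_cast at hn; omega)
    have hn := hrec n (by push_cast at hn; omega)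
    calc g n ≤ (g (n - 1) + g (n + 1)) / c := by rw [le_div_iff₀ hc]; linarith
      _ ≤ (B * (2 / c) ^ j + B * (2 / c) ^ j) / c := by gcongr
      _ = B * (2 / c) ^ (j + 1) := by rw [pow_succ]; field_simp; ring

theorem le_mul_pow_natAbs_sub_of_mul_le_add_neighbours (hc : 0 < c) (hgB : ∀ n, g n ≤ B)
    (m : ℤ) (D : ℕ) (hrec : ∀ n, D < (n - m).natAbs → c * g n ≤ g (n - 1) + g (n + 1)) (n : ℤ) :
    g n ≤ B * (2 / c) ^ ((n - m).natAbs - D) := by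
  rcases le_or_gt (n - m).natAbs D with hnear | hfar
  · simpa [Nat.sub_eq_zero_of_le hnear] using hgB n
  rcases le_or_gt m n with hright | hleft
  · refine le_mul_pow_of_mul_le_add_neighbours hc hgB (N := m + D)
      (fun n hn => hrec n (by omega)) _ n (by omega)
  · have hreflect : ∀ n, D - m < n → c * g (-n) ≤ g (-(n - 1)) + g (-(n + 1)) := by
      intro n hn
      have := hrec (-n) (by omega)
      rw [add_comm] at this
      convert this using 3 <;> ring
    simpa using le_mul_pow_of_mul_le_add_neighbours (g := fun n => g (-n)) hc (fun n => hgB (-n))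
      hreflect ((n - m).natAbs - D) (-n) (by omega)

end ThreeTermDecay

theorem pow_le_inv_pow_mul_pow {ρ : ℝ} (hρ0 : 0 < ρ) (hρ1 : ρ ≤ 1) {a b D : ℕ}
    (h : b ≤ D + a) : ρ ^ a ≤ (ρ ^ D)⁻¹ * ρ ^ b := by
  rw [le_inv_mul_iff₀ (by positivity), ← pow_add]
  exact pow_le_pow_of_le_one hρ0.le hρ1 h

theorem norm_le_of_stark_eigen {u : ℤ → ℂ} (hu : ∀ n, ‖u n‖ ≤ 1) {b : ℤ → ℝ} {E γ : ℝ} {m : ℤ}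
    (heig : ∀ n : ℤ, u (n - 1) + u (n + 1) + ((n : ℂ) + (b n : ℂ)) * u n = (E : ℂ) * u n)
    (hloc : ∀ n, |E - m - b n| ≤ γ) (n : ℤ) :
    ‖u n‖ ≤ ((2 / 3) ^ (⌈γ⌉₊ + 2))⁻¹ * (2 / 3) ^ (n - m).natAbs := by
  have hrec : ∀ n, ⌈γ⌉₊ + 2 < (n - m).natAbs → 3 * ‖u n‖ ≤ ‖u (n - 1)‖ + ‖u (n + 1)‖ := by
    intro n hn
    have hfar : γ + 3 ≤ |(n : ℝ) - m| := by
      have h : (⌈γ⌉₊ : ℝ) + 3 ≤ (n - m).natAbs := by exact_mod_cast hn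
      rw [Nat.cast_natAbs] at h
      push_cast at h
      linarith [Nat.le_ceil γ]
    have hgap : 3 ≤ |E - n - b n| := by
      have := abs_sub_abs_le_abs_sub ((n : ℝ) - m) (E - m - b n)
      rw [show (n : ℝ) - m - (E - m - b n) = -(E - n - b n) by ring, abs_neg] at this
      linarith [hloc n]
    have hshift : u (n - 1) + u (n + 1) = ((E - n - b n : ℝ) : ℂ) * u n := by
      push_cast
      linear_combination heig n
    calc 3 * ‖u n‖ ≤ |E - n - b n| * ‖u n‖ := by gcongr
      _ = ‖u (n - 1) + u (n + 1)‖ := by rw [hshift, norm_mul, Complex.norm_real, Real.norm_eq_abs]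
      _ ≤ ‖u (n - 1)‖ + ‖u (n + 1)‖ := norm_add_le _ _
  calc ‖u n‖ ≤ 1 * (2 / 3) ^ ((n - m).natAbs - (⌈γ⌉₊ + 2)) :=
        le_mul_pow_natAbs_sub_of_mul_le_add_neighbours (g := fun n => ‖u n‖) (by norm_num) hu
          m _ hrec n
    _ ≤ _ := by rw [one_mul]; exact pow_le_inv_pow_mul_pow (by norm_num) (by norm_num) (by omega)

section GeometricWeights

variable {r : ℝ}

theorem summable_rpow_mul_geometric (hr0 : 0 ≤ r) (hr1 : r < 1) (q : ℝ) :
    Summable fun n : ℕ => (n : ℝ) ^ q * r ^ n := by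
  have hpoly : ∀ n : ℕ, (n : ℝ) ^ q ≤ (n : ℝ) ^ ⌈q⌉₊ + 1 := by
    intro n
    rcases Nat.eq_zero_or_pos n with rfl | hn
    · simpa using (Real.zero_rpow_le_one q).trans (le_add_of_nonneg_left (by positivity))
    · have hn1 : (1 : ℝ) ≤ n := by exact_mod_cast hn
      calc (n : ℝ) ^ q ≤ (n : ℝ) ^ (⌈q⌉₊ : ℝ) := Real.rpow_le_rpow_of_exponent_le hn1 (Nat.le_ceil q)
        _ ≤ (n : ℝ) ^ ⌈q⌉₊ + 1 := by rw [Real.rpow_natCast]; linarith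
  refine Summable.of_nonneg_of_le (fun n => by positivity)
    (fun n => (mul_le_mul_of_nonneg_right (hpoly n) (by positivity)).trans_eq (add_one_mul _ _))
    ((summable_pow_mul_geometric_of_norm_lt_one _ ?_).add (summable_geometric_of_lt_one hr0 hr1))
  rwa [Real.norm_eq_abs, abs_of_nonneg hr0]

theorem summable_abs_rpow_mul_pow_natAbs (hr0 : 0 ≤ r) (hr1 : r < 1) (q : ℝ) :
    Summable fun n : ℤ => |(n : ℝ)| ^ q * r ^ n.natAbs :=
  Summable.of_nat_of_neg (by simpa using summable_rpow_mul_geometric hr0 hr1 q)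
    (by simpa using summable_rpow_mul_geometric hr0 hr1 q)

theorem summable_pow_natAbs (hr0 : 0 ≤ r) (hr1 : r < 1) : Summable fun n : ℤ => r ^ n.natAbs := by
  simpa using summable_abs_rpow_mul_pow_natAbs hr0 hr1 0

theorem summable_abs_rpow_mul_pow_natAbs_sub (hr0 : 0 < r) (hr1 : r < 1) (q : ℝ) (k : ℤ) :
    Summable fun n : ℤ => |(n : ℝ)| ^ q * r ^ (n - k).natAbs := by
  refine Summable.of_nonneg_of_le (fun n => by positivity) (fun n => ?_)
    ((summable_abs_rpow_mul_pow_natAbs hr0.le hr1 q).mul_left (r ^ k.natAbs)⁻¹)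
  rw [mul_left_comm]
  gcongr
  exact pow_le_inv_pow_mul_pow hr0 hr1.le (by omega)

theorem sq_pow_natAbs_sub_add_le (hr0 : 0 ≤ r) (hr1 : r ≤ 1) (k n m : ℤ) :
    (r ^ 2) ^ ((k - m).natAbs + (n - m).natAbs) ≤ r ^ (n - k).natAbs * r ^ (n - m).natAbs := by
  rw [← pow_mul, two_mul, pow_add]
  exact mul_le_mul (pow_le_pow_of_le_one hr0 hr1 (by omega))
    (pow_le_pow_of_le_one hr0 hr1 (by omega)) (by positivity) (by positivity)

theorem norm_tsum_mul_conj_mul_le {u : ℤ → ℤ → ℂ} {w : ℤ → ℂ} {K : ℝ} (hr0 : 0 ≤ r) (hr1 : r < 1)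
    (hw : ∀ m, ‖w m‖ ≤ 1) (hu : ∀ m n, ‖u m n‖ ≤ K * (r ^ 2) ^ (n - m).natAbs) (k n : ℤ) :
    ‖∑' m, w m * conj (u m k) * u m n‖ ≤ K ^ 2 * r ^ (n - k).natAbs * ∑' j : ℤ, r ^ j.natAbs := by
  have hK : 0 ≤ K := (norm_nonneg _).trans (by simpa using hu 0 0)
  have hsum : HasSum (fun m => K ^ 2 * r ^ (n - k).natAbs * r ^ (n - m).natAbs)
      (K ^ 2 * r ^ (n - k).natAbs * ∑' j : ℤ, r ^ j.natAbs) :=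
    ((Equiv.subLeft n).hasSum_iff.mpr (summable_pow_natAbs hr0 hr1).hasSum).mul_left _
  refine tsum_of_norm_bounded hsum fun m => ?_
  calc ‖w m * conj (u m k) * u m n‖ ≤ ‖u m k‖ * ‖u m n‖ := by
        rw [norm_mul, norm_mul, RCLike.norm_conj, mul_assoc]
        exact mul_le_of_le_one_left (by positivity) (hw m)
    _ ≤ (K * (r ^ 2) ^ (k - m).natAbs) * (K * (r ^ 2) ^ (n - m).natAbs) := by
        gcongr <;> apply hu
    _ = K ^ 2 * (r ^ 2) ^ ((k - m).natAbs + (n - m).natAbs) := by ring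
    _ ≤ K ^ 2 * (r ^ (n - k).natAbs * r ^ (n - m).natAbs) := by
        gcongr; exact sq_pow_natAbs_sub_add_le hr0 hr1.le k n m
    _ = K ^ 2 * r ^ (n - k).natAbs * r ^ (n - m).natAbs := by ring

end GeometricWeights

theorem stmt_4_general
    (b : ℤ → ℝ)
    (γ : ℝ)
    (φ : ℤ → ℓ2) (lam : ℤ → ℝ)
    (hON : Orthonormal ℂ φ)
    (heig : ∀ m n : ℤ,
      (φ m : ∀ _ : ℤ, ℂ) (n - 1) + (φ m : ∀ _ : ℤ, ℂ) (n + 1) +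
        ((n : ℂ) + (b n : ℂ)) * (φ m : ∀ _ : ℤ, ℂ) n
      = (lam m : ℂ) * (φ m : ∀ _ : ℤ, ℂ) n)
    (hloc : ∀ m n : ℤ, |lam m - m - b n| ≤ γ) :
    ∀ q : ℝ, 0 < q → ∀ k : ℤ,
      ∃ C : ℝ, ∀ t : ℝ,
        Summable (fun n : ℤ => (|n| : ℝ) ^ q *
          ‖∑' m : ℤ, Complex.exp (-(Complex.I * t * lam m)) *
            conj ((φ m : ∀ _ : ℤ, ℂ) k) * (φ m : ∀ _ : ℤ, ℂ) n‖ ^ 2) ∧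
        (∑' n : ℤ, (|n| : ℝ) ^ q *
          ‖∑' m : ℤ, Complex.exp (-(Complex.I * t * lam m)) *
            conj ((φ m : ∀ _ : ℤ, ℂ) k) * (φ m : ∀ _ : ℤ, ℂ) n‖ ^ 2) ≤ C := by
  intro q _ k
  set r := √(2 / 3 : ℝ)
  have hr2 : r ^ 2 = 2 / 3 := Real.sq_sqrt (by norm_num)
  have hr1 : r < 1 := by rw [Real.sqrt_lt' one_pos]; norm_num
  set K := ((2 / 3 : ℝ) ^ (⌈γ⌉₊ + 2))⁻¹
  have hdecay : ∀ m n, ‖(φ m : ∀ _ : ℤ, ℂ) n‖ ≤ K * (r ^ 2) ^ (n - m).natAbs := fun m n => by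
    have hunit := fun n => (lp.norm_apply_le_norm two_ne_zero (φ m) n).trans_eq (hON.1 m)
    rw [hr2]
    exact norm_le_of_stark_eigen hunit (heig m) (hloc m) n
  set C := (K ^ 2 * ∑' j : ℤ, r ^ j.natAbs) ^ 2
  have hψ : ∀ (t : ℝ) (n : ℤ), ‖∑' m : ℤ, Complex.exp (-(Complex.I * t * lam m)) *
      conj ((φ m : ∀ _ : ℤ, ℂ) k) * (φ m : ∀ _ : ℤ, ℂ) n‖ ^ 2 ≤ C * (r ^ 2) ^ (n - k).natAbs := by
    intro t n
    have h := norm_tsum_mul_conj_mul_le (u := fun m n => (φ m : ∀ _ : ℤ, ℂ) n)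
      (w := fun m => Complex.exp (-(Complex.I * t * lam m))) (Real.sqrt_nonneg _) hr1
      (fun m => by simp [Complex.norm_exp]) hdecay k n
    calc _ ≤ (_ : ℝ) ^ 2 := pow_le_pow_left₀ (norm_nonneg _) h 2
      _ = C * (r ^ 2) ^ (n - k).natAbs := by ring
  have hmoment := (summable_abs_rpow_mul_pow_natAbs_sub (r := r ^ 2) (by positivity)
    (by rw [hr2]; norm_num) q k).mul_left C
  refine ⟨∑' n : ℤ, C * (|(n : ℝ)| ^ q * (r ^ 2) ^ (n - k).natAbs), fun t => ?_⟩
  have hle := fun n : ℤ => (mul_le_mul_of_nonneg_left (hψ t n)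
    (Real.rpow_nonneg (abs_nonneg (n : ℝ)) q)).trans_eq (mul_left_comm _ _ _)
  have hsum := Summable.of_nonneg_of_le (fun n => by positivity) hle hmoment
  exact ⟨hsum, hsum.tsum_le_tsum hle hmoment⟩

theorem stmt_4
    (b : ℤ → ℝ) (hb : BddAbove (Set.range fun n : ℤ => |b n|))
    (γ : ℝ) (hγ : 1 ≤ γ)
    (φ : ℤ → ℓ2) (lam : ℤ → ℝ)
    (hON : Orthonormal ℂ φ)
    (hcomplete : (Submodule.span ℂ (Set.range φ)).topologicalClosure = ⊤)
    (heig : ∀ m n : ℤ,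
      (φ m : ∀ _ : ℤ, ℂ) (n - 1) + (φ m : ∀ _ : ℤ, ℂ) (n + 1) +
        ((n : ℂ) + (b n : ℂ)) * (φ m : ∀ _ : ℤ, ℂ) n
      = (lam m : ℂ) * (φ m : ∀ _ : ℤ, ℂ) n)
    (hloc : ∀ m n : ℤ, |lam m - m - b n| ≤ γ) :
    ∀ q : ℝ, 0 < q → ∀ k : ℤ,
      ∃ C : ℝ, ∀ t : ℝ,
        Summable (fun n : ℤ => (|n| : ℝ) ^ q *
          ‖∑' m : ℤ, Complex.exp (-(Complex.I * t * lam m)) *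
            conj ((φ m : ∀ _ : ℤ, ℂ) k) * (φ m : ∀ _ : ℤ, ℂ) n‖ ^ 2) ∧
        (∑' n : ℤ, (|n| : ℝ) ^ q *
          ‖∑' m : ℤ, Complex.exp (-(Complex.I * t * lam m)) *
            conj ((φ m : ∀ _ : ℤ, ℂ) k) * (φ m : ∀ _ : ℤ, ℂ) n‖ ^ 2) ≤ C :=
  stmt_4_general b γ φ lam hON heig hloc
end
end

section
/- (Power-Law ULE implies power-law dynamical localization.) Let (φ_m)_{m∈ℤ} be an orthonormal (Hilbert) basis of ℓ²(ℤ), let λ : ℤ → ℝ, let q ≥ 0, α > 3/2 + q/2, and γ_α > 0, and assume |φ_m(n)| ≤ γ_α / |n − m|^α for all m, n ∈ ℤ with m ≠ n. Then for every k ∈ ℤ there exists a constant C (depending on q, α, γ_α and k) such that for all t ∈ ℝ: Σ_{n∈ℤ} |n|^q · |Σ_{m∈ℤ} e^{−i t λ(m)} · conj(φ_m(k)) · φ_m(n)|² ≤ C. -/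
/-!
By ULE, and `‖φ m‖ = 1` on the diagonal, `|φ_m(n)| ≤ β ⟨n - m⟩^(-α)` with `⟨x⟩ = 1 + |x|`, so
`|ψ_t(n)| ≤ β² ∑_m ⟨k - m⟩^(-α) ⟨n - m⟩^(-α)` uniformly in `t`. Peetre's inequality
`⟨n⟩ ≤ ⟨n - m⟩ ⟨m - k⟩ ⟨k⟩` moves the weight `⟨n⟩^(q/2)` inside the sum, which becomes
`C_k ∑_m a(m - k) a(n - m)` with `a(j) = ⟨j⟩^(q/2 - α)`. As `α - q/2 > 1`, `a` lies in `ℓ¹ ∩ ℓ²`,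
and Young's inequality `‖a ∗ a‖₂ ≤ ‖a‖₁ ‖a‖₂` bounds the weighted sum independently of `t`.
-/

noncomputable section

open scoped BigOperators ComplexConjugate

open scoped ENNReal

lemma summable_one_add_abs_int_rpow {s : ℝ} (hs : s < -1) :
    Summable fun j : ℤ => (1 + |(j : ℝ)|) ^ s := by
  have hs' : 1 < -s := by linarith
  refine ((Real.summable_abs_int_rpow hs').congr fun j => by rw [neg_neg])
    |>.of_norm_bounded_eventually ?_
  filter_upwards [(Set.finite_singleton (0 : ℤ)).compl_mem_cofinite] with j hj
  have hj : (0 : ℝ) < |(j : ℝ)| := abs_pos.2 (Int.cast_ne_zero.2 hj)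
  rw [Real.norm_of_nonneg (by positivity)]
  exact Real.rpow_le_rpow_of_nonpos hj (by linarith) (by linarith)

/-- `⟨j⟩ ^ s` for the Japanese bracket `⟨j⟩ = 1 + |j|`, taken in `ℝ≥0∞` so that series of such
weights can be rearranged without summability side conditions. -/
def bracketRpow (s : ℝ) (j : ℤ) : ℝ≥0∞ := ENNReal.ofReal ((1 + |(j : ℝ)|) ^ s)

lemma tsum_bracketRpow_ne_top {s : ℝ} (hs : s < -1) : ∑' j, bracketRpow s j ≠ ∞ := by
  simp only [bracketRpow]
  rw [← ENNReal.ofReal_tsum_of_nonneg (fun _ => by positivity)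
    (summable_one_add_abs_int_rpow hs)]
  exact ENNReal.ofReal_ne_top

lemma bracketRpow_sq (s : ℝ) (j : ℤ) : bracketRpow s j ^ 2 = bracketRpow (2 * s) j := by
  rw [bracketRpow, bracketRpow, ← ENNReal.ofReal_pow (by positivity), ← Real.rpow_natCast,
    ← Real.rpow_mul (by positivity), mul_comm]
  norm_num

lemma one_add_abs_le_mul_one_add_abs_sub (x y : ℝ) :
    1 + |x| ≤ (1 + |x - y|) * (1 + |y|) := by
  nlinarith [abs_sub_abs_le_abs_sub x y, abs_nonneg (x - y), abs_nonneg y]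

lemma one_add_abs_rpow_mul_decay_le {p α : ℝ} (hp : 0 ≤ p) (n m k : ℝ) :
    (1 + |n|) ^ p * ((1 + |k - m|) ^ (-α) * (1 + |n - m|) ^ (-α)) ≤
      (1 + |k|) ^ p * ((1 + |m - k|) ^ (p - α) * (1 + |n - m|) ^ (p - α)) := by
  have hpeetre : (1 + |n|) ^ p ≤ (1 + |n - m|) ^ p * (1 + |m - k|) ^ p * (1 + |k|) ^ p := by
    rw [← Real.mul_rpow (by positivity) (by positivity),
      ← Real.mul_rpow (by positivity) (by positivity)]
    refine Real.rpow_le_rpow (by positivity) ?_ hp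
    calc 1 + |n| ≤ (1 + |n - m|) * (1 + |m|) := one_add_abs_le_mul_one_add_abs_sub n m
      _ ≤ (1 + |n - m|) * ((1 + |m - k|) * (1 + |k|)) := by
        gcongr; exact one_add_abs_le_mul_one_add_abs_sub m k
      _ = _ := by ring
  have hsplit : ∀ x : ℝ, 0 < x → x ^ (p - α) = x ^ p * x ^ (-α) := fun x hx => by
    rw [← Real.rpow_add hx, sub_eq_add_neg]
  rw [abs_sub_comm k m, hsplit _ (by positivity), hsplit _ (by positivity)]
  calc (1 + |n|) ^ p * ((1 + |m - k|) ^ (-α) * (1 + |n - m|) ^ (-α))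
      ≤ (1 + |n - m|) ^ p * (1 + |m - k|) ^ p * (1 + |k|) ^ p *
          ((1 + |m - k|) ^ (-α) * (1 + |n - m|) ^ (-α)) := by gcongr
    _ = _ := by ring

/-- Young's inequality `‖a ∗ b‖₂ ≤ ‖a‖₁ ‖b‖₂`, with a factor `2` from using `xy ≤ x² + y²`. -/
lemma ENNReal.tsum_sq_tsum_mul_sub_le {G : Type*} [AddGroup G] (a b : G → ℝ≥0∞) :
    ∑' n, (∑' m, a m * b (n - m)) ^ 2 ≤ 2 * (∑' m, a m) ^ 2 * ∑' j, b j ^ 2 := by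
  have hshift : ∀ m, ∑' n, b (n - m) ^ 2 = ∑' j, b j ^ 2 :=
    fun m => (Equiv.subRight m).tsum_eq (fun j => b j ^ 2)
  calc ∑' n, (∑' m, a m * b (n - m)) ^ 2
      = ∑' n, ∑' m, ∑' l, a m * a l * (b (n - m) * b (n - l)) := by
        refine tsum_congr fun n => ?_
        rw [sq, ← ENNReal.tsum_mul_right]
        refine tsum_congr fun m => ?_
        rw [← ENNReal.tsum_mul_left]
        exact tsum_congr fun l => by ring
    _ ≤ ∑' n, ∑' m, ∑' l, a m * a l * (b (n - m) ^ 2 + b (n - l) ^ 2) := by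
        gcongr with n m l
        rcases le_total (b (n - m)) (b (n - l)) with h | h
        · calc _ ≤ b (n - l) ^ 2 := by rw [sq]; gcongr
            _ ≤ _ := le_add_self
        · calc _ ≤ b (n - m) ^ 2 := by rw [sq]; gcongr
            _ ≤ _ := le_self_add
    _ = ∑' m, ∑' l, a m * a l * (∑' n, (b (n - m) ^ 2 + b (n - l) ^ 2)) := by
        rw [ENNReal.tsum_comm]
        refine tsum_congr fun m => ?_
        rw [ENNReal.tsum_comm]
        exact tsum_congr fun l => ENNReal.tsum_mul_left
    _ = 2 * (∑' m, a m) ^ 2 * ∑' j, b j ^ 2 := by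
        simp only [ENNReal.tsum_add, hshift, ENNReal.tsum_mul_left, ENNReal.tsum_mul_right]
        ring

lemma summable_and_tsum_le_of_tsum_ofReal_le {ι : Type*} {f : ι → ℝ} (hf : ∀ i, 0 ≤ f i)
    {C : ℝ≥0∞} (hC : C ≠ ∞) (h : ∑' i, ENNReal.ofReal (f i) ≤ C) :
    Summable f ∧ ∑' i, f i ≤ C.toReal := by
  have hsum : Summable f :=
    (ENNReal.summable_toReal (ne_top_of_le_ne_top hC h)).congr
      fun i => ENNReal.toReal_ofReal (hf i)
  refine ⟨hsum, ?_⟩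
  rw [← ENNReal.ofReal_le_iff_le_toReal hC, ENNReal.ofReal_tsum_of_nonneg hf hsum]
  exact h

lemma ofReal_abs_rpow_mul_sq_le {q : ℝ} (hq : 0 ≤ q) (x : ℝ) {r : ℝ} (hr : 0 ≤ r) :
    ENNReal.ofReal (|x| ^ q * r ^ 2) ≤
      (ENNReal.ofReal ((1 + |x|) ^ (q / 2)) * ENNReal.ofReal r) ^ 2 := by
  rw [← ENNReal.ofReal_mul (by positivity), ← ENNReal.ofReal_pow (by positivity)]
  refine ENNReal.ofReal_le_ofReal ?_
  have hsq : ((1 + |x|) ^ (q / 2)) ^ 2 = (1 + |x|) ^ q := by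
    rw [← Real.rpow_natCast, ← Real.rpow_mul (by positivity)]
    norm_num
  rw [mul_pow, hsq]
  gcongr
  linarith

lemma div_rpow_le_mul_one_add_rpow_neg {γ α d : ℝ} (hα : 0 ≤ α) (hd : 1 ≤ d) :
    γ / d ^ α ≤ max 1 γ * 2 ^ α * (1 + d) ^ (-α) := by
  have hd₀ : 0 < d := by linarith
  have h : (1 + d) ^ α ≤ 2 ^ α * d ^ α := by
    rw [← Real.mul_rpow (by norm_num) hd₀.le]
    exact Real.rpow_le_rpow (by positivity) (by linarith) hα
  rw [Real.rpow_neg (by positivity), ← div_eq_mul_inv, le_div_iff₀ (by positivity),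
    div_mul_eq_mul_div, div_le_iff₀ (by positivity)]
  calc γ * (1 + d) ^ α ≤ max 1 γ * (2 ^ α * d ^ α) :=
        mul_le_mul (le_max_right _ _) h (by positivity) (by positivity)
    _ = _ := by ring

lemma norm_apply_le_of_ule {φ : ℤ → ℓ2} (hON : Orthonormal ℂ φ) {α γα : ℝ} (hα : 0 ≤ α)
    (hULE : ∀ m n : ℤ, m ≠ n → ‖(φ m : ∀ _ : ℤ, ℂ) n‖ ≤ γα / (|n - m| : ℝ) ^ α) (m n : ℤ) :
    ‖(φ m : ∀ _ : ℤ, ℂ) n‖ ≤ max 1 γα * 2 ^ α * (1 + |(n : ℝ) - m|) ^ (-α) := by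
  rcases eq_or_ne m n with rfl | hmn
  · calc ‖(φ m : ∀ _ : ℤ, ℂ) m‖ ≤ ‖φ m‖ := lp.norm_apply_le_norm two_ne_zero _ _
      _ = 1 * 1 := by rw [hON.1 m, mul_one]
      _ ≤ max 1 γα * 2 ^ α := by
        gcongr
        · exact le_max_left _ _
        · exact Real.one_le_rpow one_le_two hα
      _ = _ := by simp
  · refine (hULE m n hmn).trans (div_rpow_le_mul_one_add_rpow_neg hα ?_)
    rw [← Int.cast_sub, ← Int.cast_abs]
    exact_mod_cast Int.one_le_abs (sub_ne_zero.2 hmn.symm)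

lemma norm_exp_mul_conj_mul (t l : ℝ) (z w : ℂ) :
    ‖Complex.exp (-(Complex.I * t * l)) * conj z * w‖ = ‖z‖ * ‖w‖ := by
  simp [Complex.norm_exp]

lemma ofReal_rpow_mul_enorm_tsum_le {u : ℤ → ℤ → ℂ} {β α p : ℝ} (hβ : 0 ≤ β) (hp : 0 ≤ p)
    (hu : ∀ m n, ‖u m n‖ ≤ β * (1 + |(n : ℝ) - m|) ^ (-α)) (lam : ℤ → ℝ) (t : ℝ) (k n : ℤ) :
    ENNReal.ofReal ((1 + |(n : ℝ)|) ^ p) *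
        ‖∑' m : ℤ, Complex.exp (-(Complex.I * t * lam m)) * conj (u m k) * u m n‖ₑ ≤
      ∑' m : ℤ, ENNReal.ofReal (β ^ 2 * (1 + |(k : ℝ)|) ^ p) *
        bracketRpow (p - α) (m - k) * bracketRpow (p - α) (n - m) := by
  calc _ ≤ ENNReal.ofReal ((1 + |(n : ℝ)|) ^ p) *
        ∑' m : ℤ, ‖Complex.exp (-(Complex.I * t * lam m)) * conj (u m k) * u m n‖ₑ := by
        gcongr; exact enorm_tsum_le_tsum_enorm
    _ = _ := ENNReal.tsum_mul_left.symm
    _ ≤ _ := by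
      refine ENNReal.tsum_le_tsum fun m => ?_
      rw [← ofReal_norm, norm_exp_mul_conj_mul, bracketRpow, bracketRpow,
        ← ENNReal.ofReal_mul (by positivity), ← ENNReal.ofReal_mul (by positivity),
        ← ENNReal.ofReal_mul (by positivity)]
      refine ENNReal.ofReal_le_ofReal ?_
      push_cast
      calc (1 + |(n : ℝ)|) ^ p * (‖u m k‖ * ‖u m n‖)
          ≤ (1 + |(n : ℝ)|) ^ p *
              (β * (1 + |(k : ℝ) - m|) ^ (-α) * (β * (1 + |(n : ℝ) - m|) ^ (-α))) := by
            gcongr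
            · exact hu m k
            · exact hu m n
        _ = β ^ 2 * ((1 + |(n : ℝ)|) ^ p *
              ((1 + |(k : ℝ) - m|) ^ (-α) * (1 + |(n : ℝ) - m|) ^ (-α))) := by ring
        _ ≤ β ^ 2 * ((1 + |(k : ℝ)|) ^ p *
              ((1 + |(m : ℝ) - k|) ^ (p - α) * (1 + |(n : ℝ) - m|) ^ (p - α))) :=
            mul_le_mul_of_nonneg_left (one_add_abs_rpow_mul_decay_le hp _ _ _) (by positivity)
        _ = _ := by ring

theorem stmt_5_general
    (φ : ℤ → ℓ2)
    (hON : Orthonormal ℂ φ)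
    (lam : ℤ → ℝ)
    (q : ℝ) (hq : 0 ≤ q)
    (α : ℝ) (hα : 3 / 2 + q / 2 < α)
    (γα : ℝ)
    (hULE : ∀ m n : ℤ, m ≠ n →
      ‖(φ m : ∀ _ : ℤ, ℂ) n‖ ≤ γα / (|n - m| : ℝ) ^ α) :
    ∀ k : ℤ, ∃ C : ℝ, ∀ t : ℝ,
      Summable (fun n : ℤ => (|n| : ℝ) ^ q *
        ‖∑' m : ℤ, Complex.exp (-(Complex.I * t * lam m)) *
          conj ((φ m : ∀ _ : ℤ, ℂ) k) * (φ m : ∀ _ : ℤ, ℂ) n‖ ^ 2) ∧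
      (∑' n : ℤ, (|n| : ℝ) ^ q *
        ‖∑' m : ℤ, Complex.exp (-(Complex.I * t * lam m)) *
          conj ((φ m : ∀ _ : ℤ, ℂ) k) * (φ m : ∀ _ : ℤ, ℂ) n‖ ^ 2) ≤ C := by
  intro k
  have hdecay := norm_apply_le_of_ule hON (by linarith) hULE
  set c := ENNReal.ofReal ((max 1 γα * 2 ^ α) ^ 2 * (1 + |(k : ℝ)|) ^ (q / 2))
  set A := bracketRpow (q / 2 - α)
  have hA : ∑' j, A j ≠ ∞ := tsum_bracketRpow_ne_top (by linarith)
  have hA₂ : ∑' j, A j ^ 2 ≠ ∞ := by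
    simp only [A, bracketRpow_sq]
    exact tsum_bracketRpow_ne_top (by linarith)
  refine ⟨(2 * (c * ∑' j, A j) ^ 2 * ∑' j, A j ^ 2).toReal, fun t => ?_⟩
  refine summable_and_tsum_le_of_tsum_ofReal_le (fun n => by positivity)
    (ENNReal.mul_ne_top (ENNReal.mul_ne_top (by norm_num)
      (ENNReal.pow_ne_top (ENNReal.mul_ne_top ENNReal.ofReal_ne_top hA))) hA₂) ?_
  calc _ ≤ ∑' n : ℤ, (ENNReal.ofReal ((1 + |(n : ℝ)|) ^ (q / 2)) *
        ‖∑' m : ℤ, Complex.exp (-(Complex.I * t * lam m)) *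
          conj ((φ m : ∀ _ : ℤ, ℂ) k) * (φ m : ∀ _ : ℤ, ℂ) n‖ₑ) ^ 2 :=
        ENNReal.tsum_le_tsum fun n => by
          rw [← ofReal_norm]; exact ofReal_abs_rpow_mul_sq_le hq _ (norm_nonneg _)
    _ ≤ ∑' n : ℤ, (∑' m, c * A (m - k) * A (n - m)) ^ 2 := by
        gcongr with n
        exact ofReal_rpow_mul_enorm_tsum_le (by positivity) (by linarith) hdecay lam t k n
    _ ≤ 2 * (∑' m, c * A (m - k)) ^ 2 * ∑' j, A j ^ 2 := ENNReal.tsum_sq_tsum_mul_sub_le _ _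
    _ = _ := by
        have hshift : ∑' m, A (m - k) = ∑' j, A j := (Equiv.subRight k).tsum_eq A
        rw [ENNReal.tsum_mul_left, hshift]

theorem stmt_5
    (φ : ℤ → ℓ2)
    (hON : Orthonormal ℂ φ)
    (hcomplete : (Submodule.span ℂ (Set.range φ)).topologicalClosure = ⊤)
    (lam : ℤ → ℝ)
    (q : ℝ) (hq : 0 ≤ q)
    (α : ℝ) (hα : 3 / 2 + q / 2 < α)
    (γα : ℝ) (hγα : 0 < γα)
    (hULE : ∀ m n : ℤ, m ≠ n →
      ‖(φ m : ∀ _ : ℤ, ℂ) n‖ ≤ γα / (|n - m| : ℝ) ^ α) :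
    ∀ k : ℤ, ∃ C : ℝ, ∀ t : ℝ,
      Summable (fun n : ℤ => (|n| : ℝ) ^ q *
        ‖∑' m : ℤ, Complex.exp (-(Complex.I * t * lam m)) *
          conj ((φ m : ∀ _ : ℤ, ℂ) k) * (φ m : ∀ _ : ℤ, ℂ) n‖ ^ 2) ∧
      (∑' n : ℤ, (|n| : ℝ) ^ q *
        ‖∑' m : ℤ, Complex.exp (-(Complex.I * t * lam m)) *
          conj ((φ m : ∀ _ : ℤ, ℂ) k) * (φ m : ∀ _ : ℤ, ℂ) n‖ ^ 2) ≤ C :=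
  stmt_5_general φ hON lam q hq α hα γα hULE
end
end

section
/- Let (φ_m)_{m∈ℤ} be an orthonormal family in ℓ²(ℤ), let q ≥ 0, α > 3/2 + q/2, and γ_α > 0, and assume |φ_m(n)| ≤ γ_α / |n − m|^α for all m, n ∈ ℤ with m ≠ n. Set ε₀ = α − 3/2 − q/2 > 0. Then for every k ∈ ℤ there exists a constant C_k > 0 such that for every n ∈ ℤ with |n| ≥ 2 and n ∉ {k−1, k, k+1}: Σ_{m∈ℤ} |φ_m(k)| · |φ_m(n)| ≤ C_k / |n − k|^{(1+q+ε₀)/2}. In particular, uniformly in t ∈ ℝ, |Σ_{m∈ℤ} e^{−itλ(m)} conj(φ_m(k)) φ_m(n)| ≤ C_k / |n − k|^{(1+q+ε₀)/2} for any λ : ℤ → ℝ. -/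
/-!
For a fixed coordinate `l`, the power-law bound and `|φ_l(l)| ≤ 1` dominate `m ↦ |φ_m(l)|` by a
shifted `p`-series with `p = α > 1`, so these columns are uniformly bounded in `ℓ¹`. For `k ≠ n`,
every `m` is at distance at least `|n - k| / 2` from `k` or from `n`, so one of `|φ_m(k)|`,
`|φ_m(n)|` is at most `γ 2^α / |n - k|^α`, and summing against the other factor gives
`Σ_m |φ_m(k)| |φ_m(n)| ≲ |n - k|^(-α)`. The exponent `(1 + q + ε₀) / 2` is at most `α`.
-/

noncomputable section

open scoped BigOperators ComplexConjugate

theorem div_rpow_le_of_half_le {γ α D x : ℝ} (hγ : 0 ≤ γ) (hα : 0 ≤ α) (hD : 0 < D)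
    (hx : D / 2 ≤ x) : γ / x ^ α ≤ γ * 2 ^ α / D ^ α := by
  have hhalf : γ * 2 ^ α / D ^ α = γ / (D / 2) ^ α := by
    rw [Real.div_rpow hD.le zero_le_two, div_div_eq_mul_div]
  rw [hhalf]
  exact div_le_div_of_nonneg_left hγ (by positivity) (Real.rpow_le_rpow (by positivity) hx hα)

theorem summable_and_tsum_le_of_powerLaw {f : ℤ → ℝ} (hf : 0 ≤ f) {γ α M : ℝ} (hα : 1 < α)
    {l : ℤ} (hdiag : f l ≤ M) (hoff : ∀ m, m ≠ l → f m ≤ γ / |(l : ℝ) - m| ^ α) :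
    Summable f ∧ ∑' m, f m ≤ γ * ∑' j : ℤ, |(j : ℝ)| ^ (-α) + M := by
  set g : ℤ → ℝ := fun m => γ * |((m - l : ℤ) : ℝ)| ^ (-α) + if m = l then M else 0
  have hshift : HasSum (fun m : ℤ => |((m - l : ℤ) : ℝ)| ^ (-α)) (∑' j : ℤ, |(j : ℝ)| ^ (-α)) :=
    (Equiv.subRight l).hasSum_iff.mpr (Real.summable_abs_int_rpow hα).hasSum
  have hg : HasSum g (γ * ∑' j : ℤ, |(j : ℝ)| ^ (-α) + M) :=
    (hshift.mul_left γ).add (hasSum_ite_eq l M)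
  have hfg : ∀ m, f m ≤ g m := by
    intro m
    by_cases hml : m = l
    · subst hml
      simp [g, Real.zero_rpow (by linarith : -α ≠ 0), hdiag]
    · calc f m ≤ γ / |(l : ℝ) - m| ^ α := hoff m hml
        _ = γ * |((m - l : ℤ) : ℝ)| ^ (-α) := by
          rw [Real.rpow_neg (abs_nonneg _), Int.cast_sub, abs_sub_comm, div_eq_mul_inv]
        _ ≤ g m := by simp [g, hml]
  have hsf : Summable f := hg.summable.of_nonneg_of_le hf hfg
  exact ⟨hsf, hasSum_le hfg hsf.hasSum hg⟩

theorem summable_mul_and_tsum_mul_le_of_powerLaw {a b : ℤ → ℝ} (ha0 : 0 ≤ a) (hb0 : 0 ≤ b)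
    (hsa : Summable a) (hsb : Summable b) {γ α : ℝ} (hγ : 0 ≤ γ) (hα : 0 ≤ α) {k n : ℤ}
    (hkn : k ≠ n) (ha : ∀ m, m ≠ k → a m ≤ γ / |(k : ℝ) - m| ^ α)
    (hb : ∀ m, m ≠ n → b m ≤ γ / |(n : ℝ) - m| ^ α) :
    Summable (fun m => a m * b m) ∧
      ∑' m, a m * b m ≤ γ * 2 ^ α / |(n : ℝ) - k| ^ α * (∑' m, a m + ∑' m, b m) := by
  set c := γ * 2 ^ α / |(n : ℝ) - k| ^ α
  have hD : 0 < |(n : ℝ) - k| := abs_pos.mpr (sub_ne_zero.mpr (by exact_mod_cast hkn.symm))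
  have hc : 0 ≤ c := by positivity
  have hpoint : ∀ m, a m * b m ≤ c * (a m + b m) := by
    intro m
    have htri : |(n : ℝ) - k| ≤ |(k : ℝ) - m| + |(n : ℝ) - m| := by
      rw [abs_sub_comm (k : ℝ)]
      linarith [abs_sub_le (n : ℝ) m k]
    rcases le_or_gt (|(n : ℝ) - k| / 2) |(k : ℝ) - m| with hk | hk
    · have hmk : m ≠ k := by rintro rfl; simp at hk; linarith
      have hac := (ha m hmk).trans (div_rpow_le_of_half_le hγ hα hD hk)
      linarith [mul_le_mul_of_nonneg_right hac (hb0 m), mul_nonneg hc (ha0 m)]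
    · have hmn : m ≠ n := by rintro rfl; simp at htri; linarith
      have hbc := (hb m hmn).trans (div_rpow_le_of_half_le hγ hα hD (by linarith))
      linarith [mul_le_mul_of_nonneg_left hbc (ha0 m), mul_nonneg hc (hb0 m)]
  have hs : Summable (fun m => c * (a m + b m)) := (hsa.add hsb).mul_left c
  have hsab : Summable (fun m => a m * b m) :=
    hs.of_nonneg_of_le (fun m => mul_nonneg (ha0 m) (hb0 m)) hpoint
  refine ⟨hsab, ?_⟩
  calc ∑' m, a m * b m ≤ ∑' m, c * (a m + b m) := hsab.tsum_le_tsum hpoint hs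
    _ = c * (∑' m, a m + ∑' m, b m) := by rw [tsum_mul_left, hsa.tsum_add hsb]

theorem norm_tsum_exp_mul_conj_mul_le {ι : Type*} (lam : ι → ℝ) (t : ℝ) (u v : ι → ℂ)
    (h : Summable fun m => ‖u m‖ * ‖v m‖) :
    ‖∑' m, Complex.exp (-(Complex.I * t * lam m)) * conj (u m) * v m‖ ≤
      ∑' m, ‖u m‖ * ‖v m‖ := by
  have hnorm : ∀ m, ‖Complex.exp (-(Complex.I * t * lam m)) * conj (u m) * v m‖ =
      ‖u m‖ * ‖v m‖ := by
    intro m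
    simp [Complex.norm_exp]
  simp_rw [← hnorm] at h ⊢
  exact norm_tsum_le_tsum_norm h

theorem stmt_6
    (φ : ℤ → ℓ2)
    (hON : Orthonormal ℂ φ)
    (q : ℝ) (hq : 0 ≤ q)
    (α : ℝ) (hα : 3 / 2 + q / 2 < α)
    (γα : ℝ) (hγα : 0 < γα)
    (hULE : ∀ m n : ℤ, m ≠ n →
      ‖(φ m : ∀ _ : ℤ, ℂ) n‖ ≤ γα / (|n - m| : ℝ) ^ α) :
    ∀ k : ℤ, ∃ Ck > 0, ∀ n : ℤ, 2 ≤ |n| →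
      n ≠ k - 1 → n ≠ k → n ≠ k + 1 →
      (∑' m : ℤ, ‖(φ m : ∀ _ : ℤ, ℂ) k‖ * ‖(φ m : ∀ _ : ℤ, ℂ) n‖)
          ≤ Ck / (|n - k| : ℝ) ^ ((1 + q + (α - 3 / 2 - q / 2)) / 2) ∧
      ∀ (lam : ℤ → ℝ) (t : ℝ),
        ‖∑' m : ℤ, Complex.exp (-(Complex.I * t * lam m)) *
            conj ((φ m : ∀ _ : ℤ, ℂ) k) * (φ m : ∀ _ : ℤ, ℂ) n‖
          ≤ Ck / (|n - k| : ℝ) ^ ((1 + q + (α - 3 / 2 - q / 2)) / 2) := by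
  have hcoord : ∀ m l : ℤ, ‖(φ m : ∀ _ : ℤ, ℂ) l‖ ≤ 1 := fun m l => by
    simpa [hON.1 m] using lp.norm_apply_le_norm two_ne_zero (φ m) l
  set B := γα * ∑' j : ℤ, |(j : ℝ)| ^ (-α) + 1
  have hB : 0 < B := by
    have : 0 ≤ ∑' j : ℤ, |(j : ℝ)| ^ (-α) :=
      tsum_nonneg fun j => Real.rpow_nonneg (abs_nonneg _) _
    positivity
  have hcol : ∀ l : ℤ, Summable (fun m => ‖(φ m : ∀ _ : ℤ, ℂ) l‖) ∧
      ∑' m, ‖(φ m : ∀ _ : ℤ, ℂ) l‖ ≤ B := fun l =>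
    summable_and_tsum_le_of_powerLaw (fun m => norm_nonneg _) (by linarith) (hcoord l l)
      fun m hm => hULE m l hm
  intro k
  refine ⟨2 * B * γα * 2 ^ α, by positivity, fun n _ _ hnk _ => ?_⟩
  obtain ⟨hsum, hle⟩ := summable_mul_and_tsum_mul_le_of_powerLaw (fun m => norm_nonneg _)
    (fun m => norm_nonneg _) (hcol k).1 (hcol n).1 hγα.le (by linarith) (Ne.symm hnk)
    (fun m hm => hULE m k hm) (fun m hm => hULE m n hm)
  have hD : (1 : ℝ) ≤ |(n : ℝ) - k| := by
    exact_mod_cast Int.one_le_abs (sub_ne_zero.mpr hnk)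
  have hmain : ∑' m : ℤ, ‖(φ m : ∀ _ : ℤ, ℂ) k‖ * ‖(φ m : ∀ _ : ℤ, ℂ) n‖ ≤
      2 * B * γα * 2 ^ α / |(n : ℝ) - k| ^ ((1 + q + (α - 3 / 2 - q / 2)) / 2) :=
    calc _ ≤ γα * 2 ^ α / |(n : ℝ) - k| ^ α * (B + B) :=
          hle.trans (by gcongr; exacts [(hcol k).2, (hcol n).2])
      _ = 2 * B * γα * 2 ^ α / |(n : ℝ) - k| ^ α := by ring
      _ ≤ _ := by gcongr; linarith
  exact ⟨hmain, fun lam t => (norm_tsum_exp_mul_conj_mul_le lam t _ _ hsum).trans hmain⟩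
end
end

section
/- Let (φ_m)_{m∈ℤ} be a family of unit vectors in ℓ²(ℤ), let α > 0, ε > 0 with α − 1 − ε/2 > 0, and γ_α > 0, and assume |φ_m(n)| ≤ γ_α / |n − m|^α for all m, n ∈ ℤ with m ≠ n. Let A₀ = Σ_{m∈ℤ, m≠0} 1/|m|^{1+ε/2} (a finite constant). Then for all k, n ∈ ℤ with |k| ≥ 2 and n ∉ {k−1, k, k+1}: Σ over m ∈ ℤ with |m| ≥ 2, m ∉ {n, n−1, n+1} and m ∉ {k, k−1, k+1} of |φ_m(k)| · |φ_m(n)| is at most A₀ · γ_α² · |k|^{1+ε/2} / |n − k|^{α−1−ε/2}. -/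
noncomputable section

open scoped BigOperators ComplexConjugate

lemma abs_two_le_aux {x : ℤ} (h1 : x ≠ -1) (h2 : x ≠ 0) (h3 : x ≠ 1) : 2 ≤ |x| := by
  rcases abs_cases x with ⟨h, _⟩ | ⟨h, _⟩ <;> omega

lemma ne_zero_of_two_le_abs {x : ℤ} (h : 2 ≤ |x|) : x ≠ 0 := by
  rcases abs_cases x with ⟨h', _⟩ | ⟨h', _⟩ <;> omega

theorem stmt_7
    (φ : ℤ → ℓ2) (hunit : ∀ m : ℤ, ‖φ m‖ = 1)
    (α : ℝ) (hα : 0 < α)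
    (ε : ℝ) (hε : 0 < ε) (hαε : 0 < α - 1 - ε / 2)
    (γα : ℝ) (hγα : 0 < γα)
    (hULE : ∀ m n : ℤ, m ≠ n →
      ‖(φ m : ∀ _ : ℤ, ℂ) n‖ ≤ γα / (|n - m| : ℝ) ^ α) :
    ∀ k n : ℤ, 2 ≤ |k| → n ≠ k - 1 → n ≠ k → n ≠ k + 1 →
      (∑' m : ℤ, if 2 ≤ |m| ∧ m ≠ n - 1 ∧ m ≠ n ∧ m ≠ n + 1 ∧
            m ≠ k - 1 ∧ m ≠ k ∧ m ≠ k + 1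
          then ‖(φ m : ∀ _ : ℤ, ℂ) k‖ * ‖(φ m : ∀ _ : ℤ, ℂ) n‖ else 0)
        ≤ (∑' m : ℤ, if m ≠ 0 then 1 / (|m| : ℝ) ^ (1 + ε / 2) else 0) *
            γα ^ 2 * (|k| : ℝ) ^ (1 + ε / 2) / (|n - k| : ℝ) ^ (α - 1 - ε / 2) := by
  intro k n hk hn1 hn2 hn3
  set δ : ℝ := 1 + ε / 2 with hδdef
  set β : ℝ := α - 1 - ε / 2 with hβdef
  have hδpos : 0 < δ := by rw [hδdef]; linarith
  have hβpos : 0 < β := hαε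
  have hnk : 2 ≤ |n - k| := abs_two_le_aux (by omega) (by omega) (by omega)
  have hnkR : (2 : ℝ) ≤ |(n : ℝ) - (k : ℝ)| := by exact_mod_cast hnk
  have hkR : (2 : ℝ) ≤ |(k : ℝ)| := by exact_mod_cast hk
  set C : ℝ := γα ^ 2 * |(k : ℝ)| ^ δ / |(n : ℝ) - (k : ℝ)| ^ β with hCdef
  have hCpos : 0 < C := by
    apply div_pos (by positivity)
    exact Real.rpow_pos_of_pos (by linarith) _
  set w : ℤ → ℝ := fun m => if m ≠ 0 then 1 / |(m : ℝ)| ^ δ else 0 with hwdef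
  have hw_eq : ∀ m : ℤ, w m = |(m : ℝ)| ^ (-δ) := by
    intro m
    by_cases hm : m = 0
    · simp [hwdef, hm, Real.zero_rpow (by linarith : -δ ≠ 0)]
    · simp only [hwdef, hm, if_true, ne_eq, not_false_eq_true]
      rw [Real.rpow_neg (abs_nonneg _), one_div]
  have hwsum : Summable w := by
    refine (Real.summable_abs_int_rpow (by rw [hδdef]; linarith : 1 < δ)).congr ?_
    intro m; rw [hw_eq]
  have hwnonneg : ∀ m : ℤ, 0 ≤ w m := by
    intro m; rw [hw_eq]; positivity
  -- pointwise bound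
  have key : ∀ m : ℤ,
      (if 2 ≤ |m| ∧ m ≠ n - 1 ∧ m ≠ n ∧ m ≠ n + 1 ∧
            m ≠ k - 1 ∧ m ≠ k ∧ m ≠ k + 1
          then ‖(φ m : ∀ _ : ℤ, ℂ) k‖ * ‖(φ m : ∀ _ : ℤ, ℂ) n‖ else 0)
        ≤ w m * C := by
    intro m
    by_cases hm : 2 ≤ |m| ∧ m ≠ n - 1 ∧ m ≠ n ∧ m ≠ n + 1 ∧
        m ≠ k - 1 ∧ m ≠ k ∧ m ≠ k + 1
    · rw [if_pos hm]
      obtain ⟨hm2, hmn1, hmn2, hmn3, hmk1, hmk2, hmk3⟩ := hm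
      have hm0 : m ≠ 0 := ne_zero_of_two_le_abs hm2
      have hkm : 2 ≤ |k - m| := abs_two_le_aux (by omega) (by omega) (by omega)
      have hnm : 2 ≤ |n - m| := abs_two_le_aux (by omega) (by omega) (by omega)
      have ha : (2 : ℝ) ≤ |(k : ℝ) - (m : ℝ)| := by exact_mod_cast hkm
      have hb : (2 : ℝ) ≤ |(n : ℝ) - (m : ℝ)| := by exact_mod_cast hnm
      have hmR : (2 : ℝ) ≤ |(m : ℝ)| := by exact_mod_cast hm2
      set a : ℝ := |(k : ℝ) - (m : ℝ)|
      set b : ℝ := |(n : ℝ) - (m : ℝ)|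
      have hab1 : |(n : ℝ) - (k : ℝ)| ≤ a * b := by
        have t : |(n : ℝ) - (k : ℝ)| ≤ |(n : ℝ) - (m : ℝ)| + |(m : ℝ) - (k : ℝ)| :=
          abs_sub_le _ _ _
        rw [abs_sub_comm (m : ℝ) (k : ℝ)] at t
        nlinarith
      have hab2 : |(m : ℝ)| / |(k : ℝ)| ≤ a * b := by
        have t : |(m : ℝ)| ≤ |(m : ℝ) - (k : ℝ)| + |(k : ℝ)| := by
          have := abs_add_le ((m : ℝ) - (k : ℝ)) (k : ℝ)
          simpa using this
        rw [abs_sub_comm (m : ℝ) (k : ℝ)] at t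
        rw [div_le_iff₀ (by linarith)]
        nlinarith
      have h1 : ‖(φ m : ∀ _ : ℤ, ℂ) k‖ * ‖(φ m : ∀ _ : ℤ, ℂ) n‖
          ≤ γα ^ 2 / (a * b) ^ α := by
        have e1 := hULE m k hmk2
        have e2 := hULE m n hmn2
        have hapos : (0:ℝ) < a ^ α := Real.rpow_pos_of_pos (by linarith) _
        have hbpos : (0:ℝ) < b ^ α := Real.rpow_pos_of_pos (by linarith) _
        calc ‖(φ m : ∀ _ : ℤ, ℂ) k‖ * ‖(φ m : ∀ _ : ℤ, ℂ) n‖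
            ≤ (γα / a ^ α) * (γα / b ^ α) :=
              mul_le_mul e1 e2 (norm_nonneg _) (by positivity)
          _ = γα ^ 2 / (a * b) ^ α := by
              rw [Real.mul_rpow (by linarith) (by linarith)]
              field_simp
      have habpos : (0:ℝ) < a * b := by nlinarith
      have hsplit : (a * b) ^ α = (a * b) ^ β * (a * b) ^ δ := by
        rw [← Real.rpow_add habpos]
        congr 1
        rw [hβdef, hδdef]; ring
      have hb1 : |(n : ℝ) - (k : ℝ)| ^ β ≤ (a * b) ^ β :=
        Real.rpow_le_rpow (by positivity) hab1 (le_of_lt hβpos)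
      have hb2 : (|(m : ℝ)| / |(k : ℝ)|) ^ δ ≤ (a * b) ^ δ :=
        Real.rpow_le_rpow (by positivity) hab2 (le_of_lt hδpos)
      have hdiv : (|(m : ℝ)| / |(k : ℝ)|) ^ δ = |(m : ℝ)| ^ δ / |(k : ℝ)| ^ δ :=
        Real.div_rpow (by positivity) (by positivity) δ
      have p1 : (0:ℝ) < |(n : ℝ) - (k : ℝ)| ^ β := Real.rpow_pos_of_pos (by linarith) _
      have p2 : (0:ℝ) < |(m : ℝ)| ^ δ := Real.rpow_pos_of_pos (by linarith) _
      have p3 : (0:ℝ) < |(k : ℝ)| ^ δ := Real.rpow_pos_of_pos (by linarith) _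
      have hdenpos : (0:ℝ) < |(n : ℝ) - (k : ℝ)| ^ β * (|(m : ℝ)| ^ δ / |(k : ℝ)| ^ δ) := by
        positivity
      have hden : |(n : ℝ) - (k : ℝ)| ^ β * (|(m : ℝ)| ^ δ / |(k : ℝ)| ^ δ) ≤ (a * b) ^ α := by
        rw [hsplit, ← hdiv]
        exact mul_le_mul hb1 hb2 (by positivity) (by positivity)
      have h2 : γα ^ 2 / (a * b) ^ α
          ≤ γα ^ 2 / (|(n : ℝ) - (k : ℝ)| ^ β * (|(m : ℝ)| ^ δ / |(k : ℝ)| ^ δ)) :=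
        div_le_div_of_nonneg_left (by positivity) hdenpos hden
      have h3 : γα ^ 2 / (|(n : ℝ) - (k : ℝ)| ^ β * (|(m : ℝ)| ^ δ / |(k : ℝ)| ^ δ))
          = w m * C := by
        rw [hw_eq, Real.rpow_neg (abs_nonneg _), hCdef]
        field_simp
      linarith
    · rw [if_neg hm]
      exact mul_nonneg (hwnonneg m) (le_of_lt hCpos)
  have hrhs_sum : Summable (fun m : ℤ => w m * C) := hwsum.mul_right C
  have hlhs_sum : Summable (fun m : ℤ =>
      if 2 ≤ |m| ∧ m ≠ n - 1 ∧ m ≠ n ∧ m ≠ n + 1 ∧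
            m ≠ k - 1 ∧ m ≠ k ∧ m ≠ k + 1
          then ‖(φ m : ∀ _ : ℤ, ℂ) k‖ * ‖(φ m : ∀ _ : ℤ, ℂ) n‖ else 0) := by
    refine Summable.of_nonneg_of_le (fun m => ?_) key hrhs_sum
    by_cases hm : 2 ≤ |m| ∧ m ≠ n - 1 ∧ m ≠ n ∧ m ≠ n + 1 ∧
        m ≠ k - 1 ∧ m ≠ k ∧ m ≠ k + 1
    · rw [if_pos hm]; positivity
    · rw [if_neg hm]
  calc (∑' m : ℤ, if 2 ≤ |m| ∧ m ≠ n - 1 ∧ m ≠ n ∧ m ≠ n + 1 ∧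
            m ≠ k - 1 ∧ m ≠ k ∧ m ≠ k + 1
          then ‖(φ m : ∀ _ : ℤ, ℂ) k‖ * ‖(φ m : ∀ _ : ℤ, ℂ) n‖ else 0)
      ≤ ∑' m : ℤ, w m * C := Summable.tsum_le_tsum key hlhs_sum hrhs_sum
    _ = (∑' m : ℤ, w m) * C := tsum_mul_right
    _ = (∑' m : ℤ, w m) * γα ^ 2 * |(k : ℝ)| ^ δ / |(n : ℝ) - (k : ℝ)| ^ β := by
        rw [hCdef]; ring
end
end

section
/- Let (φ_m)_{m∈ℤ} be a family of unit vectors in ℓ²(ℤ), let α > 0, ε > 0 with α − 1 − ε/2 > 0, and γ_α > 0, and assume |φ_m(n)| ≤ γ_α / |n − m|^α for all m, n ∈ ℤ with m ≠ n. Let A₀ = Σ_{m∈ℤ, |m| ≥ 2} 1/(|m|−1)^{1+ε/2} (a finite constant). Then for all k, n ∈ ℤ with |k| ≤ 1, |n| ≥ 2 and n ∉ {k−1, k, k+1}: Σ over m ∈ ℤ with |m| ≥ 2, m ∉ {n, n−1, n+1} and m ∉ {k, k−1, k+1} of |φ_m(k)| · |φ_m(n)| is at most A₀ · γ_α² ·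 4^{α−1−ε/2} / |n − k|^{α−1−ε/2}. -/
noncomputable section

open scoped BigOperators ComplexConjugate

theorem stmt_8
    (φ : ℤ → ℓ2) (hunit : ∀ m : ℤ, ‖φ m‖ = 1)
    (α : ℝ) (hα : 0 < α)
    (ε : ℝ) (hε : 0 < ε) (hαε : 0 < α - 1 - ε / 2)
    (γα : ℝ) (hγα : 0 < γα)
    (hULE : ∀ m n : ℤ, m ≠ n →
      ‖(φ m : ∀ _ : ℤ, ℂ) n‖ ≤ γα / (|n - m| : ℝ) ^ α) :
    ∀ k n : ℤ, |k| ≤ 1 → 2 ≤ |n| → n ≠ k - 1 → n ≠ k → n ≠ k + 1 →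
      (∑' m : ℤ, if 2 ≤ |m| ∧ m ≠ n - 1 ∧ m ≠ n ∧ m ≠ n + 1 ∧
            m ≠ k - 1 ∧ m ≠ k ∧ m ≠ k + 1
          then ‖(φ m : ∀ _ : ℤ, ℂ) k‖ * ‖(φ m : ∀ _ : ℤ, ℂ) n‖ else 0)
        ≤ (∑' m : ℤ, if 2 ≤ |m| then 1 / ((|m| : ℝ) - 1) ^ (1 + ε / 2) else 0) *
            γα ^ 2 * (4 : ℝ) ^ (α - 1 - ε / 2) / (|n - k| : ℝ) ^ (α - 1 - ε / 2) := by
  intro k n hk hn hnk1 hnk2 hnk3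
  set θ : ℝ := α - 1 - ε / 2 with hθ
  set p : ℝ := 1 + ε / 2 with hp
  have hp1 : (1:ℝ) < p := by rw [hp]; linarith
  have hp0 : (0:ℝ) < p := by linarith
  have hθ0 : (0:ℝ) < θ := hαε
  have hpθ : p + θ = α := by rw [hp, hθ]; ring
  -- D = |n - k| as real
  set D : ℝ := |(n : ℝ) - (k : ℝ)| with hD
  have hD1 : (1:ℝ) ≤ D := by
    have h1 : (1:ℤ) ≤ |n - k| := by rw [le_abs]; omega
    rw [hD]
    calc (1:ℝ) = ((1:ℤ) : ℝ) := by norm_num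
      _ ≤ ((|n - k| : ℤ) : ℝ) := by exact_mod_cast h1
      _ = |(n:ℝ) - (k:ℝ)| := by push_cast; ring_nf
  have hD0 : (0:ℝ) < D := by linarith
  set C : ℝ := γα ^ 2 * (4:ℝ) ^ θ / D ^ θ with hC
  have hC0 : (0:ℝ) ≤ C := by positivity
  set g : ℤ → ℝ := fun m => if 2 ≤ |m| then 1 / (|(m : ℝ)| - 1) ^ p else 0 with hgdef
  set f : ℤ → ℝ := fun m => if 2 ≤ |m| ∧ m ≠ n - 1 ∧ m ≠ n ∧ m ≠ n + 1 ∧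
            m ≠ k - 1 ∧ m ≠ k ∧ m ≠ k + 1
          then ‖(φ m : ∀ _ : ℤ, ℂ) k‖ * ‖(φ m : ∀ _ : ℤ, ℂ) n‖ else 0 with hfdef
  have habs : ∀ m : ℤ, 2 ≤ |m| → (2:ℝ) ≤ |(m:ℝ)| := by
    intro m h
    calc (2:ℝ) = ((2:ℤ) : ℝ) := by norm_num
      _ ≤ ((|m| : ℤ) : ℝ) := by exact_mod_cast h
      _ = |(m:ℝ)| := by push_cast; ring
  have hgnn : ∀ m, 0 ≤ g m := by
    intro m
    rw [hgdef]; dsimp only; split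
    · rename_i h
      have h2 := habs m h
      have : (0:ℝ) < (|(m:ℝ)| - 1) ^ p := Real.rpow_pos_of_pos (by linarith) p
      positivity
    · exact le_rfl
  -- summability of g
  have hg : Summable g := by
    have hs : Summable (fun m : ℤ => (2:ℝ) ^ p * |(m:ℝ)| ^ (-p)) :=
      (Real.summable_abs_int_rpow hp1).mul_left _
    apply Summable.of_nonneg_of_le hgnn _ hs
    intro m
    rw [hgdef]; dsimp only; split
    · rename_i h
      have h2 := habs m h
      set x : ℝ := |(m:ℝ)| with hx
      have hx1 : (0:ℝ) < x - 1 := by linarith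
      have hxp : (0:ℝ) < x ^ p := Real.rpow_pos_of_pos (by linarith) p
      rw [Real.rpow_neg (by positivity : (0:ℝ) ≤ x), ← div_eq_mul_inv,
        div_le_div_iff₀ (Real.rpow_pos_of_pos hx1 p) hxp]
      have key : x ^ p ≤ (2 * (x - 1)) ^ p :=
        Real.rpow_le_rpow (by linarith) (by linarith) (le_of_lt hp0)
      calc (1:ℝ) * x ^ p = x ^ p := by ring
        _ ≤ (2 * (x - 1)) ^ p := key
        _ = 2 ^ p * (x - 1) ^ p := Real.mul_rpow (by norm_num) (by linarith)
    · positivity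
  have hgC : Summable (fun m => g m * C) := hg.mul_right C
  -- nonnegativity of f
  have hf0 : ∀ m, 0 ≤ f m := by
    intro m
    rw [hfdef]; dsimp only; split
    · positivity
    · exact le_rfl
  -- pointwise bound
  have hfle : ∀ m, f m ≤ g m * C := by
    intro m
    rw [hfdef, hgdef]; dsimp only
    split
    · rename_i h
      obtain ⟨h1, h2, h3, h4, h5, h6, h7⟩ := h
      rw [if_pos h1]
      -- integer inequalities
      have hab1 : (2:ℤ) ≤ |k - m| := by rw [le_abs]; omega
      have hab2 : (2:ℤ) ≤ |n - m| := by rw [le_abs]; omega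
      have hm1 : |m| - 1 ≤ |k - m| * |n - m| := by
        have t1 : |m| - |k| ≤ |m - k| := abs_sub_abs_le_abs_sub m k
        have t2 : |m - k| = |k - m| := abs_sub_comm m k
        nlinarith [abs_nonneg (k - m)]
      have hnk4 : |n - k| ≤ 4 * (|k - m| * |n - m|) := by
        have t1 : |n - k| ≤ |n - m| + |m - k| := abs_sub_le n m k
        have t2 : |m - k| = |k - m| := abs_sub_comm m k
        nlinarith
      set a : ℝ := |(k:ℝ) - (m:ℝ)| with ha
      set b : ℝ := |(n:ℝ) - (m:ℝ)| with hb
      have hacast : a = ((|k - m| : ℤ) : ℝ) := by rw [ha]; push_cast; ring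
      have hbcast : b = ((|n - m| : ℤ) : ℝ) := by rw [hb]; push_cast; ring
      have ha2 : (2:ℝ) ≤ a := by rw [hacast]; exact_mod_cast hab1
      have hb2 : (2:ℝ) ≤ b := by rw [hbcast]; exact_mod_cast hab2
      set M : ℝ := |(m : ℝ)| - 1 with hM
      have hM1 : (1:ℝ) ≤ M := by
        have := habs m h1; rw [hM]; linarith
      have hMab : M ≤ a * b := by
        rw [hM, ha, hb]; exact_mod_cast hm1
      have hDab : D ≤ 4 * (a * b) := by
        rw [hD, ha, hb]
        have : |(n:ℝ) - (k:ℝ)| = ((|n - k| : ℤ) : ℝ) := by push_cast; ring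
        rw [this]
        have h4 : ((4 * (|k - m| * |n - m|) : ℤ) : ℝ) = 4 * (|(k:ℝ)-(m:ℝ)| * |(n:ℝ)-(m:ℝ)|) := by
          push_cast; ring
        rw [← h4]; exact_mod_cast hnk4
      have hab0 : (0:ℝ) < a * b := by nlinarith
      -- ULE bounds
      have hφk : ‖(φ m : ∀ _ : ℤ, ℂ) k‖ ≤ γα / a ^ α := hULE m k (by omega)
      have hφn : ‖(φ m : ∀ _ : ℤ, ℂ) n‖ ≤ γα / b ^ α := hULE m n h3
      have haα : (0:ℝ) < a ^ α := Real.rpow_pos_of_pos (by linarith) α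
      have hbα : (0:ℝ) < b ^ α := Real.rpow_pos_of_pos (by linarith) α
      have step1 : ‖(φ m : ∀ _ : ℤ, ℂ) k‖ * ‖(φ m : ∀ _ : ℤ, ℂ) n‖
          ≤ γα ^ 2 / (a * b) ^ α := by
        have hmul := mul_le_mul hφk hφn (norm_nonneg _) (by positivity)
        calc ‖(φ m : ∀ _ : ℤ, ℂ) k‖ * ‖(φ m : ∀ _ : ℤ, ℂ) n‖
            ≤ (γα / a ^ α) * (γα / b ^ α) := hmul
          _ = γα ^ 2 / (a ^ α * b ^ α) := by ring
          _ = γα ^ 2 / (a * b) ^ α := by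
              rw [Real.mul_rpow (by linarith) (by linarith)]
      have hsplit : (a * b) ^ α = (a * b) ^ p * (a * b) ^ θ := by
        rw [← Real.rpow_add hab0, hpθ]
      have hMp : M ^ p ≤ (a * b) ^ p :=
        Real.rpow_le_rpow (by linarith) hMab (le_of_lt hp0)
      have hD4 : (D / 4) ^ θ ≤ (a * b) ^ θ :=
        Real.rpow_le_rpow (by positivity) (by linarith) (le_of_lt hθ0)
      have hMp0 : (0:ℝ) < M ^ p := Real.rpow_pos_of_pos (by linarith) p
      have hD40 : (0:ℝ) < (D / 4) ^ θ := Real.rpow_pos_of_pos (by positivity) θ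
      have step2 : γα ^ 2 / (a * b) ^ α ≤ γα ^ 2 / (M ^ p * (D / 4) ^ θ) := by
        rw [hsplit]
        gcongr
      have step3 : γα ^ 2 / (M ^ p * (D / 4) ^ θ) = 1 / M ^ p * C := by
        rw [hC, Real.div_rpow (by positivity) (by norm_num)]
        have h4θ : (0:ℝ) < (4:ℝ) ^ θ := Real.rpow_pos_of_pos (by norm_num) θ
        have hDθ : (0:ℝ) < D ^ θ := Real.rpow_pos_of_pos hD0 θ
        field_simp
      calc ‖(φ m : ∀ _ : ℤ, ℂ) k‖ * ‖(φ m : ∀ _ : ℤ, ℂ) n‖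
          ≤ γα ^ 2 / (a * b) ^ α := step1
        _ ≤ γα ^ 2 / (M ^ p * (D / 4) ^ θ) := step2
        _ = 1 / M ^ p * C := step3
        _ = (1 / (|(m : ℝ)| - 1) ^ p) * C := by rw [hM]
    · exact mul_nonneg (hgnn m) hC0
  have hf : Summable f := Summable.of_nonneg_of_le hf0 hfle hgC
  calc (∑' m, f m) ≤ ∑' m, g m * C := Summable.tsum_le_tsum hfle hf hgC
    _ = (∑' m, g m) * C := tsum_mul_right
    _ = (∑' m, g m) * γα ^ 2 * (4:ℝ) ^ θ / D ^ θ := by rw [hC]; ring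
end
end

section
/- Fix a : ℤ → ℂ with a(0) = 0, a(−m) = conj(a(m)) for all m, and Σ_{m∈ℤ} |a(m)| < ∞, and fix a bounded b : ℤ → ℝ. Let γ ≥ 1/2, let m ∈ ℤ, and let (λ, φ) be an eigenpair of T_0 + b with |λ − m − b(n)| ≤ γ for all n ∈ ℤ. Then for every n ∈ ℤ with |m − n| > 2γ: |φ(n)| ≤ (4γ / |m − n|) · Σ_{k∈ℤ} |a(k)| · |φ(n − k)|. -/
noncomputable section

open scoped BigOperators ComplexConjugate

theorem stmt_10
    (a : ℤ → ℂ) (ha0 : a 0 = 0) (hsym : ∀ m : ℤ, a (-m) = conj (a m))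
    (hsum : Summable fun m : ℤ => ‖a m‖)
    (b : ℤ → ℝ) (hb : BddAbove (Set.range fun n : ℤ => |b n|))
    (γ : ℝ) (hγ : 1 / 2 ≤ γ)
    (m : ℤ) (lam : ℝ) (φ : ℓ2)
    (heig : IsEigenpair a b lam (φ : ∀ _ : ℤ, ℂ))
    (hloc : ∀ n : ℤ, |lam - m - b n| ≤ γ) :
    ∀ n : ℤ, 2 * γ < |m - n| →
      ‖(φ : ∀ _ : ℤ, ℂ) n‖ ≤ (4 * γ / (|m - n| : ℝ)) *
        ∑' k : ℤ, ‖a k‖ * ‖(φ : ∀ _ : ℤ, ℂ) (n - k)‖ := by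
  intro n hn
  set ψ : ℤ → ℂ := (φ : ∀ _ : ℤ, ℂ) with hψ
  have hγpos : (0:ℝ) < γ := lt_of_lt_of_le (by norm_num) hγ
  push_cast at hn
  have hrpos : (0:ℝ) < |(m:ℝ) - n| := lt_trans (by positivity) hn
  set r : ℝ := |(m:ℝ) - (n:ℝ)| with hr
  -- boundedness of φ
  have hφb : ∀ k : ℤ, ‖ψ k‖ ≤ ‖φ‖ := fun k => lp.norm_apply_le_norm two_ne_zero φ k
  have hS : Summable fun k : ℤ => ‖a k‖ * ‖ψ (n - k)‖ := by
    apply Summable.of_nonneg_of_le (fun k => by positivity)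
      (fun k => mul_le_mul_of_nonneg_left (hφb _) (norm_nonneg _))
    exact hsum.mul_right _
  have hS2 : Summable fun k : ℤ => ‖a k * ψ (n - k)‖ := by
    simpa [norm_mul] using hS
  -- rearrange eigen equation
  have h1 : (((lam : ℂ) - n - b n)) * ψ n = ∑' k : ℤ, a k * ψ (n - k) := by
    have hre : (∑' k : ℤ, a k * ψ (n - k)) = ∑' m' : ℤ, a (n - m') * ψ m' := by
      have := (Equiv.subLeft n).tsum_eq (fun m' => a (n - m') * ψ m')
      simpa [Equiv.subLeft, sub_sub_cancel] using this
    rw [hre]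
    linear_combination -heig n
  -- norm bound
  have h2 : |lam - n - b n| * ‖ψ n‖ ≤ ∑' k : ℤ, ‖a k‖ * ‖ψ (n - k)‖ := by
    have : ‖(((lam : ℂ) - n - b n)) * ψ n‖ ≤ ∑' k : ℤ, ‖a k * ψ (n - k)‖ := by
      rw [h1]; exact norm_tsum_le_tsum_norm hS2
    have heq : ‖(((lam : ℂ) - n - b n)) * ψ n‖ = |lam - n - b n| * ‖ψ n‖ := by
      rw [norm_mul]
      congr 1
      have : ((lam : ℂ) - n - b n) = ((lam - n - b n : ℝ) : ℂ) := by push_cast; ring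
      rw [this, Complex.norm_real, Real.norm_eq_abs]
    rw [heq] at this
    calc |lam - n - b n| * ‖ψ n‖ ≤ ∑' k : ℤ, ‖a k * ψ (n - k)‖ := this
      _ = ∑' k : ℤ, ‖a k‖ * ‖ψ (n - k)‖ := by simp [norm_mul]
  -- denominator lower bound
  have hd : r / (4 * γ) ≤ |lam - n - b n| := by
    have habs : |(m : ℝ) - n| ≤ |lam - n - b n| + |lam - m - b n| := by
      have : (m : ℝ) - n = (lam - n - b n) - (lam - m - b n) := by ring
      rw [this]; exact abs_sub _ _
    have hl := hloc n
    have h4 : r - γ ≤ |lam - n - b n| := by rw [hr]; linarith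
    rw [div_le_iff₀ (by positivity)]
    nlinarith [abs_nonneg (lam - n - b n)]
  -- conclude
  have hSnn : 0 ≤ ∑' k : ℤ, ‖a k‖ * ‖ψ (n - k)‖ :=
    tsum_nonneg (fun k => by positivity)
  have h3 : r / (4 * γ) * ‖ψ n‖ ≤ ∑' k : ℤ, ‖a k‖ * ‖ψ (n - k)‖ :=
    le_trans (mul_le_mul_of_nonneg_right hd (norm_nonneg _)) h2
  have hstep : ‖ψ n‖ ≤ (∑' k : ℤ, ‖a k‖ * ‖ψ (n - k)‖) / (r / (4 * γ)) := by
    rw [le_div_iff₀ (by positivity)]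
    linarith [h3, mul_comm (‖ψ n‖) (r / (4 * γ))]
  calc ‖ψ n‖ ≤ (∑' k : ℤ, ‖a k‖ * ‖ψ (n - k)‖) / (r / (4 * γ)) := hstep
    _ = (4 * γ / r) * ∑' k : ℤ, ‖a k‖ * ‖ψ (n - k)‖ := by
        rw [div_div_eq_mul_div]; ring
end
end

section
/- Fix a : ℤ → ℂ with a(0) = 0, a(−m) = conj(a(m)) for all m, and ‖a‖_0 = Σ_{m∈ℤ} |a(m)| < ∞, and fix a bounded b : ℤ → ℝ. Let γ ≥ 1, let m ∈ ℤ, and let (λ, φ) be an eigenpair of T_0 + b with ‖φ‖ = 1 and |λ − m − b(n)| ≤ γ for all n ∈ ℤ. Then there exists a constant γ₀ > 0, depending only on ‖a‖_0 and γ, such that |φ(n)| ≤ γ₀ / |m − n| for all n ∈ ℤ with n ≠ m. -/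
noncomputable section

open scoped BigOperators ComplexConjugate

set_option maxHeartbeats 1000000 in
theorem stmt_11
    (a : ℤ → ℂ) (ha0 : a 0 = 0) (hsym : ∀ m : ℤ, a (-m) = conj (a m))
    (hsum : Summable fun m : ℤ => ‖a m‖)
    (b : ℤ → ℝ) (hb : BddAbove (Set.range fun n : ℤ => |b n|))
    (γ : ℝ) (hγ : 1 ≤ γ) :
    ∃ γ₀ > 0, ∀ (m : ℤ) (lam : ℝ) (φ : ℓ2), ‖φ‖ = 1 →
      IsEigenpair a b lam (φ : ∀ _ : ℤ, ℂ) →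
      (∀ n : ℤ, |lam - m - b n| ≤ γ) →
      ∀ n : ℤ, n ≠ m → ‖(φ : ∀ _ : ℤ, ℂ) n‖ ≤ γ₀ / (|m - n| : ℝ) := by
  set A : ℝ := ∑' m : ℤ, ‖a m‖ with hA
  have hA0 : 0 ≤ A := tsum_nonneg fun _ => norm_nonneg _
  refine ⟨2 * A + 2 * γ, by nlinarith, ?_⟩
  intro m lam φ hφ heig hγn n hnm
  have hd1 : (1 : ℝ) ≤ |(m : ℝ) - n| := by
    have h : (1 : ℤ) ≤ |m - n| := Int.one_le_abs (by omega)
    calc (1 : ℝ) ≤ ((|m - n| : ℤ) : ℝ) := by exact_mod_cast h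
      _ = |(m : ℝ) - n| := by push_cast; rfl
  set d : ℝ := |(m : ℝ) - n| with hd
  have hdpos : 0 < d := lt_of_lt_of_le one_pos hd1
  have hφle : ∀ k : ℤ, ‖(φ : ∀ _ : ℤ, ℂ) k‖ ≤ 1 := by
    intro k
    calc ‖(φ : ∀ _ : ℤ, ℂ) k‖ ≤ ‖φ‖ := lp.norm_apply_le_norm (by norm_num) φ k
      _ = 1 := hφ
  have hsa : Summable fun k : ℤ => ‖a (n - k)‖ :=
    (Equiv.subLeft n).summable_iff.mpr hsum
  have hmul : ∀ k : ℤ, ‖a (n - k) * (φ : ∀ _ : ℤ, ℂ) k‖ ≤ ‖a (n - k)‖ := by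
    intro k
    calc ‖a (n - k) * (φ : ∀ _ : ℤ, ℂ) k‖ = ‖a (n - k)‖ * ‖(φ : ∀ _ : ℤ, ℂ) k‖ :=
          norm_mul _ _
      _ ≤ ‖a (n - k)‖ * 1 := mul_le_mul_of_nonneg_left (hφle k) (norm_nonneg _)
      _ = ‖a (n - k)‖ := mul_one _
  have hs2 : Summable fun k : ℤ => ‖a (n - k) * (φ : ∀ _ : ℤ, ℂ) k‖ :=
    Summable.of_nonneg_of_le (fun _ => norm_nonneg _) hmul hsa
  have hSle : ‖∑' k : ℤ, a (n - k) * (φ : ∀ _ : ℤ, ℂ) k‖ ≤ A := by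
    calc ‖∑' k : ℤ, a (n - k) * (φ : ∀ _ : ℤ, ℂ) k‖
        ≤ ∑' k : ℤ, ‖a (n - k) * (φ : ∀ _ : ℤ, ℂ) k‖ := norm_tsum_le_tsum_norm hs2
      _ ≤ ∑' k : ℤ, ‖a (n - k)‖ := Summable.tsum_le_tsum hmul hs2 hsa
      _ = A := (Equiv.subLeft n).tsum_eq (fun k => ‖a k‖)
  have heq : ((lam - n - b n : ℝ) : ℂ) * (φ : ∀ _ : ℤ, ℂ) n
      = ∑' k : ℤ, a (n - k) * (φ : ∀ _ : ℤ, ℂ) k := by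
    have h := heig n
    have hS := eq_sub_of_add_eq h
    calc ((lam - (n : ℝ) - b n : ℝ) : ℂ) * (φ : ∀ _ : ℤ, ℂ) n
        = (lam : ℂ) * (φ : ∀ _ : ℤ, ℂ) n
          - ((n : ℂ) + ((b n : ℝ) : ℂ)) * (φ : ∀ _ : ℤ, ℂ) n := by push_cast; ring
      _ = ∑' k : ℤ, a (n - k) * (φ : ∀ _ : ℤ, ℂ) k := hS.symm
  have hkey : |lam - n - b n| * ‖(φ : ∀ _ : ℤ, ℂ) n‖ ≤ A := by
    calc |lam - n - b n| * ‖(φ : ∀ _ : ℤ, ℂ) n‖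
        = ‖((lam - n - b n : ℝ) : ℂ)‖ * ‖(φ : ∀ _ : ℤ, ℂ) n‖ := by
          rw [Complex.norm_real, Real.norm_eq_abs]
      _ = ‖((lam - n - b n : ℝ) : ℂ) * (φ : ∀ _ : ℤ, ℂ) n‖ := (norm_mul _ _).symm
      _ = ‖∑' k : ℤ, a (n - k) * (φ : ∀ _ : ℤ, ℂ) k‖ := by rw [heq]
      _ ≤ A := hSle
  have htri : d ≤ γ + |lam - n - b n| := by
    have h1 := hγn n
    have h2 : ((m : ℝ) - (n : ℝ)) = -(lam - (m : ℝ) - b n) + (lam - (n : ℝ) - b n) := by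
      ring
    calc d = |(-(lam - (m : ℝ) - b n) + (lam - (n : ℝ) - b n))| := by rw [hd, h2]
      _ ≤ |(-(lam - (m : ℝ) - b n))| + |lam - (n : ℝ) - b n| := abs_add_le _ _
      _ = |lam - (m : ℝ) - b n| + |lam - (n : ℝ) - b n| := by rw [abs_neg]
      _ ≤ γ + |lam - (n : ℝ) - b n| := by linarith
  have hgoal : ‖(φ : ∀ _ : ℤ, ℂ) n‖ ≤ (2 * A + 2 * γ) / d := by
    by_cases hc : 2 * γ ≤ d
    · have hc2 : d / 2 ≤ |lam - n - b n| := by linarith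
      have h2 : d / 2 * ‖(φ : ∀ _ : ℤ, ℂ) n‖ ≤ A :=
        le_trans (mul_le_mul_of_nonneg_right hc2 (norm_nonneg _)) hkey
      rw [le_div_iff₀ hdpos]
      nlinarith [norm_nonneg ((φ : ∀ _ : ℤ, ℂ) n)]
    · push_neg at hc
      rw [le_div_iff₀ hdpos]
      nlinarith [hφle n, norm_nonneg ((φ : ∀ _ : ℤ, ℂ) n)]
  calc ‖(φ : ∀ _ : ℤ, ℂ) n‖ ≤ (2 * A + 2 * γ) / d := hgoal
    _ = (2 * A + 2 * γ) / (|m - n| : ℝ) := by rw [hd]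
end
end

section
/- Fix a : ℤ → ℂ with a(0) = 0, a(−m) = conj(a(m)) for all m, and ‖a‖_1 = Σ_{m∈ℤ} |a(m)|·|m| < ∞, and fix a bounded b : ℤ → ℝ. Let γ ≥ 1, let m ∈ ℤ, and let (λ, φ) be an eigenpair of T_0 + b with ‖φ‖ = 1 and |λ − m − b(n)| ≤ γ for all n ∈ ℤ. Then there exists a constant γ₁ > 0, depending only on ‖a‖_1 and γ, such that |φ(n)| ≤ γ₁ / |m − n|² for all n ∈ ℤ with n ≠ m. -/
/-!
Write `A = ∑ ‖a k‖` and `S = ∑ ‖a k‖ |k|`. Reading the eigenvalue equation at `n`, and using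
`|λ - n - b n| ≥ |m - n| - γ`, gives `(|m - n| - γ) |φ n| ≤ ∑ₖ ‖a (n - k)‖ |φ k|`.
Since `|φ| ≤ 1`, this already yields `|m - n| |φ n| ≤ A + γ =: C` for all `n`.
Feeding this back in through `|m - n| ≤ |m - k| + |n - k|` bounds `|m - n|` times the right-hand
side by `C A + S`, hence `|m - n|² |φ n| ≤ C A + S + γ C = C² + S`.
-/

noncomputable section

open scoped BigOperators ComplexConjugate

section Reflection

variable {G α : Type*} [AddCommGroup G] [AddCommMonoid α] [TopologicalSpace α]

theorem Summable.comp_sub_left {f : G → α} (hf : Summable f) (n : G) :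
    Summable fun k => f (n - k) :=
  (Equiv.subLeft n).summable_iff.mpr hf

theorem tsum_comp_sub_left (f : G → α) (n : G) : ∑' k, f (n - k) = ∑' k, f k :=
  (Equiv.subLeft n).tsum_eq f

end Reflection

theorem summable_norm_of_summable_norm_mul_abs {E : Type*} [SeminormedAddCommGroup E]
    {a : ℤ → E} (ha0 : a 0 = 0) (h : Summable fun k : ℤ => ‖a k‖ * |(k : ℝ)|) :
    Summable fun k => ‖a k‖ := by
  refine h.of_nonneg_of_le (fun k => norm_nonneg _) fun k => ?_
  rcases eq_or_ne k 0 with rfl | hk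
  · simp [ha0]
  · have : (1 : ℝ) ≤ |(k : ℝ)| := by exact_mod_cast Int.one_le_abs hk
    exact le_mul_of_one_le_right (norm_nonneg _) this

namespace IsEigenpair

variable {a : ℤ → ℂ} {b : ℤ → ℝ} {lam γ : ℝ} {φ : ℤ → ℂ} {m : ℤ}

theorem abs_mul_norm_le (h : IsEigenpair a b lam φ) {n : ℤ}
    (hs : Summable fun k => ‖a (n - k)‖ * ‖φ k‖) :
    |lam - n - b n| * ‖φ n‖ ≤ ∑' k, ‖a (n - k)‖ * ‖φ k‖ := by
  have hconv : ∑' k, a (n - k) * φ k = ((lam - n - b n : ℝ) : ℂ) * φ n := by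
    push_cast
    linear_combination h n
  calc |lam - n - b n| * ‖φ n‖ = ‖∑' k, a (n - k) * φ k‖ := by
        rw [hconv, norm_mul, Complex.norm_real, Real.norm_eq_abs]
    _ ≤ ∑' k, ‖a (n - k)‖ * ‖φ k‖ := by
        simpa only [norm_mul] using norm_tsum_le_tsum_norm (hs.congr fun k => (norm_mul _ _).symm)

theorem sub_mul_norm_le (h : IsEigenpair a b lam φ) {n : ℤ} (hlam : |lam - m - b n| ≤ γ)
    (hs : Summable fun k => ‖a (n - k)‖ * ‖φ k‖) :
    (|(m : ℝ) - n| - γ) * ‖φ n‖ ≤ ∑' k, ‖a (n - k)‖ * ‖φ k‖ := by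
  refine le_trans (mul_le_mul_of_nonneg_right ?_ (norm_nonneg _)) (h.abs_mul_norm_le hs)
  have htri := abs_sub (lam - n - b n) (lam - m - b n)
  rw [show lam - n - b n - (lam - m - b n) = (m : ℝ) - n by ring] at htri
  linarith

variable (h : IsEigenpair a b lam φ) (hlam : ∀ n, |lam - m - b n| ≤ γ) (hφ : ∀ k, ‖φ k‖ ≤ 1)
  (ha : Summable fun k => ‖a k‖) (hγ : 0 ≤ γ)
include h hlam hφ ha hγ

theorem abs_sub_mul_norm_le (n : ℤ) : |(m : ℝ) - n| * ‖φ n‖ ≤ (∑' k, ‖a k‖) + γ := by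
  have hs := ha.comp_sub_left n
  have hle : ∀ k, ‖a (n - k)‖ * ‖φ k‖ ≤ ‖a (n - k)‖ :=
    fun k => mul_le_of_le_one_right (norm_nonneg _) (hφ k)
  have hsφ : Summable fun k => ‖a (n - k)‖ * ‖φ k‖ :=
    hs.of_nonneg_of_le (fun k => by positivity) hle
  have hA : ∑' k, ‖a (n - k)‖ * ‖φ k‖ ≤ ∑' k, ‖a k‖ :=
    tsum_comp_sub_left (fun k => ‖a k‖) n ▸ hsφ.tsum_le_tsum hle hs
  linarith [h.sub_mul_norm_le (hlam n) hsφ, mul_le_mul_of_nonneg_left (hφ n) hγ]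

theorem sq_abs_sub_mul_norm_le (ha1 : Summable fun k : ℤ => ‖a k‖ * |(k : ℝ)|) (n : ℤ) :
    |(m : ℝ) - n| ^ 2 * ‖φ n‖ ≤ ((∑' k, ‖a k‖) + γ) ^ 2 + ∑' k : ℤ, ‖a k‖ * |(k : ℝ)| := by
  set C := (∑' k, ‖a k‖) + γ
  have hC : ∀ k : ℤ, |(m : ℝ) - k| * ‖φ k‖ ≤ C := h.abs_sub_mul_norm_le hlam hφ ha hγ
  have hs := ha.comp_sub_left n
  have hs1 := ha1.comp_sub_left n
  have hsφ : Summable fun k => ‖a (n - k)‖ * ‖φ k‖ :=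
    hs.of_nonneg_of_le (fun k => by positivity)
      fun k => mul_le_of_le_one_right (norm_nonneg _) (hφ k)
  have hpoint : ∀ k, |(m : ℝ) - n| * (‖a (n - k)‖ * ‖φ k‖)
      ≤ C * ‖a (n - k)‖ + ‖a (n - k)‖ * |((n - k : ℤ) : ℝ)| := by
    intro k
    have hφk : |(m : ℝ) - n| * ‖φ k‖ ≤ C + |((n - k : ℤ) : ℝ)| := by
      calc |(m : ℝ) - n| * ‖φ k‖ ≤ (|(m : ℝ) - k| + |((n - k : ℤ) : ℝ)|) * ‖φ k‖ := by
            gcongr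
            push_cast
            exact (abs_sub_le _ _ _).trans_eq (by rw [abs_sub_comm (k : ℝ)])
        _ ≤ C + |((n - k : ℤ) : ℝ)| := by
            rw [add_mul]
            exact add_le_add (hC k) (mul_le_of_le_one_right (abs_nonneg _) (hφ k))
    calc |(m : ℝ) - n| * (‖a (n - k)‖ * ‖φ k‖) = ‖a (n - k)‖ * (|(m : ℝ) - n| * ‖φ k‖) := by
          ring
      _ ≤ ‖a (n - k)‖ * (C + |((n - k : ℤ) : ℝ)|) := by gcongr
      _ = C * ‖a (n - k)‖ + ‖a (n - k)‖ * |((n - k : ℤ) : ℝ)| := by ring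
  have hsum : |(m : ℝ) - n| * ∑' k, ‖a (n - k)‖ * ‖φ k‖
      ≤ C * ∑' k, ‖a k‖ + ∑' k : ℤ, ‖a k‖ * |(k : ℝ)| := by
    rw [← tsum_mul_left, ← tsum_comp_sub_left (fun k => ‖a k‖) n,
      ← tsum_comp_sub_left (fun k : ℤ => ‖a k‖ * |(k : ℝ)|) n, ← tsum_mul_left,
      ← (hs.mul_left C).tsum_add hs1]
    exact (hsφ.mul_left _).tsum_le_tsum hpoint ((hs.mul_left C).add hs1)
  linarith [mul_le_mul_of_nonneg_left (h.sub_mul_norm_le (hlam n) hsφ) (abs_nonneg ((m : ℝ) - n)),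
    mul_le_mul_of_nonneg_left (hC n) hγ]

end IsEigenpair

theorem stmt_12_general
    (a : ℤ → ℂ) (ha0 : a 0 = 0)
    (hsum : Summable fun m : ℤ => ‖a m‖ * (|m| : ℝ))
    (b : ℤ → ℝ)
    (γ : ℝ) (hγ : 1 ≤ γ) :
    ∃ γ₁ > 0, ∀ (m : ℤ) (lam : ℝ) (φ : ℓ2), ‖φ‖ = 1 →
      IsEigenpair a b lam (φ : ∀ _ : ℤ, ℂ) →
      (∀ n : ℤ, |lam - m - b n| ≤ γ) →
      ∀ n : ℤ, n ≠ m → ‖(φ : ∀ _ : ℤ, ℂ) n‖ ≤ γ₁ / (|m - n| : ℝ) ^ 2 := by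
  have ha := summable_norm_of_summable_norm_mul_abs ha0 hsum
  have hA : 0 ≤ ∑' k, ‖a k‖ := tsum_nonneg fun _ => norm_nonneg _
  have hS : 0 ≤ ∑' k : ℤ, ‖a k‖ * |(k : ℝ)| := tsum_nonneg fun _ => by positivity
  refine ⟨((∑' k, ‖a k‖) + γ) ^ 2 + ∑' k : ℤ, ‖a k‖ * |(k : ℝ)|, by nlinarith, ?_⟩
  intro m lam φ hφ heig hlam n hn
  have hφ1 : ∀ k, ‖(φ : ∀ _ : ℤ, ℂ) k‖ ≤ 1 := fun k => hφ ▸ lp.norm_apply_le_norm two_ne_zero φ k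
  have hmn : (m : ℝ) - n ≠ 0 := sub_ne_zero.mpr (Int.cast_injective.ne hn.symm)
  rw [le_div_iff₀ (by positivity), mul_comm]
  exact heig.sq_abs_sub_mul_norm_le hlam hφ1 ha (by linarith) hsum n

theorem stmt_12
    (a : ℤ → ℂ) (ha0 : a 0 = 0) (hsym : ∀ m : ℤ, a (-m) = conj (a m))
    (hsum : Summable fun m : ℤ => ‖a m‖ * (|m| : ℝ))
    (b : ℤ → ℝ) (hb : BddAbove (Set.range fun n : ℤ => |b n|))
    (γ : ℝ) (hγ : 1 ≤ γ) :
    ∃ γ₁ > 0, ∀ (m : ℤ) (lam : ℝ) (φ : ℓ2), ‖φ‖ = 1 →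
      IsEigenpair a b lam (φ : ∀ _ : ℤ, ℂ) →
      (∀ n : ℤ, |lam - m - b n| ≤ γ) →
      ∀ n : ℤ, n ≠ m → ‖(φ : ∀ _ : ℤ, ℂ) n‖ ≤ γ₁ / (|m - n| : ℝ) ^ 2 :=
  stmt_12_general a ha0 hsum b γ hγ
end
end
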